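/- arXiv:0910.1884 — 7 statements merged into one kernel-verified Lean document; each statement's English description precedes it below -/
import Mathlib

section
/- If A is a set of positive integers with upper Banach density d*(A) > α for some 0 < α < 1, and B = A·A = {a·a' : a, a' ∈ A} is enumerated in increasing order as b_1 < b_2 < ..., then there exist infinitely many n such that b_{n+1} - b_n ≤ 16·α^{-3}. -/
/-- The upper Banach density of a set of natural numbers. -/
noncomputable def upperBanachDensity (A : Set ℕ) : ℝ :=
  Filter.limsup
    (fun K : ℕ => ⨆ x : ℕ, (Nat.card (A ∩ Set.Ioc x (x + K) : Set ℕ) : ℝ) / K)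
    Filter.atTop

/-!
The density hypothesis gives arbitrarily long windows `(x, x + K]` containing at least `α K`
elements of `A`, all beyond `b N`. In such a window, the elements `t` with no other element in
`(t, t + G]`, `G = ⌊2 / α⌋`, are `G`-separated, hence fewer than about `α K / 2`. So more than
`G (K / (d + 1) + 1)` elements have a successor `t + g` in the window with `1 ≤ g ≤ G`, and by
pigeonhole one shift `g` serves more than `K / (d + 1) + 1` of them, `d = ⌊16 / (α³ G)⌋`; two of
these, `u < w`, are then at most `d` apart. The products `u (w + g) < w (u + g)` lie in `A·A` and
differ by `g (w - u) ≤ G d ≤ 16 / α³`.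
-/

open Filter Finset

lemma card_le_of_separated {x K e : ℕ} {s : Finset ℕ} (hs : s ⊆ Ioc x (x + K))
    (hsep : ∀ u ∈ s, ∀ w ∈ s, u < w → u + e < w) : (#s : ℝ) ≤ K / (e + 1) + 1 := by
  set q : ℕ → ℕ := fun u => (u - x - 1) / (e + 1)
  have hq : StrictMonoOn q s := by
    intro u hu w hw huw
    have hxu := (mem_Ioc.1 (hs hu)).1
    have := hsep u hu w hw huw
    calc q u < q u + 1 := lt_add_one _
      _ = (u - x - 1 + (e + 1)) / (e + 1) := (Nat.add_div_right _ e.succ_pos).symm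
      _ ≤ q w := Nat.div_le_div_right (by omega)
  have hmaps : Set.MapsTo q s (range ((K - 1) / (e + 1) + 1)) := fun u hu => by
    have := (mem_Ioc.1 (hs hu)).2
    exact mem_range.2 (Nat.lt_succ_of_le (Nat.div_le_div_right (by omega)))
  have hcard : #s ≤ (K - 1) / (e + 1) + 1 := by
    simpa using card_le_card_of_injOn q hmaps hq.injOn
  calc (#s : ℝ) ≤ ((K - 1) / (e + 1) : ℕ) + 1 := by exact_mod_cast hcard
    _ ≤ ((K - 1 : ℕ) : ℝ) / (e + 1) + 1 := by gcongr; exact_mod_cast Nat.cast_div_le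
    _ ≤ K / (e + 1) + 1 := by gcongr; exact_mod_cast K.sub_le 1

lemma exists_lt_le_add_of_card_gt {x K e : ℕ} {s : Finset ℕ} (hs : s ⊆ Ioc x (x + K))
    (hcard : (K : ℝ) / (e + 1) + 1 < #s) : ∃ u ∈ s, ∃ w ∈ s, u < w ∧ w ≤ u + e := by
  by_contra! hsep
  exact hcard.not_ge (card_le_of_separated hs fun u hu w hw huw => hsep u hu w hw huw)

lemma exists_translate_pair {x K G d : ℕ} {S : Finset ℕ} (hS : S ⊆ Ioc x (x + K))
    (hcard : G * ((K : ℝ) / (d + 1) + 1) + (K / (G + 1) + 1) < #S) :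
    ∃ g ∈ Icc 1 G, ∃ u w, u ∈ S ∧ u + g ∈ S ∧ w ∈ S ∧ w + g ∈ S ∧ u < w ∧ w ≤ u + d := by
  classical
  set U : ℕ → Finset ℕ := fun g => {t ∈ S | t + g ∈ S}
  set T : Finset ℕ := {t ∈ S | ∀ g ∈ Icc 1 G, t + g ∉ S}
  have hT : (#T : ℝ) ≤ K / (G + 1) + 1 := by
    refine card_le_of_separated ((filter_subset _ _).trans hS) fun u hu w hw huw => ?_
    by_contra! hwu
    exact (mem_filter.1 hu).2 (w - u) (mem_Icc.2 ⟨by omega, by omega⟩)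
      (by rw [Nat.add_sub_cancel' huw.le]; exact (mem_filter.1 hw).1)
  have hcover : S ⊆ T ∪ (Icc 1 G).biUnion U := by
    intro t ht
    by_cases h : ∃ g ∈ Icc 1 G, t + g ∈ S
    · obtain ⟨g, hg, htg⟩ := h
      exact mem_union_right _ (mem_biUnion.2 ⟨g, hg, mem_filter.2 ⟨ht, htg⟩⟩)
    · exact mem_union_left _ (mem_filter.2 ⟨ht, fun g hg htg => h ⟨g, hg, htg⟩⟩)
  have hS_le : (#S : ℝ) ≤ #T + ∑ g ∈ Icc 1 G, (#(U g) : ℝ) := by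
    exact_mod_cast (card_le_card hcover).trans ((card_union_le _ _).trans
      (Nat.add_le_add_left card_biUnion_le _))
  have hsum : ∑ _g ∈ Icc 1 G, ((K : ℝ) / (d + 1) + 1) < ∑ g ∈ Icc 1 G, (#(U g) : ℝ) := by
    rw [sum_const, Nat.card_Icc, Nat.add_sub_cancel, nsmul_eq_mul]
    linarith
  obtain ⟨g, hg, hUg⟩ := exists_lt_of_sum_lt hsum
  obtain ⟨u, hu, w, hw, huw, hwu⟩ :=
    exists_lt_le_add_of_card_gt ((filter_subset _ _).trans hS) hUg
  exact ⟨g, hg, u, w, (mem_filter.1 hu).1, (mem_filter.1 hu).2, (mem_filter.1 hw).1,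
    (mem_filter.1 hw).2, huw, hwu⟩

lemma exists_scales {α K : ℝ} (hα : 0 < α) (hK : 8 / α ^ 2 + 4 / α < K) :
    ∃ G d : ℕ, (G * d : ℝ) ≤ 16 / α ^ 3 ∧ G * (K / (d + 1) + 1) + (K / (G + 1) + 1) < α * K := by
  set G := ⌊2 / α⌋₊
  set d := ⌊16 / (α ^ 3 * G)⌋₊
  have hKpos : 0 < K := lt_trans (by positivity) hK
  have hG : (G : ℝ) ≤ 2 / α := Nat.floor_le (by positivity)
  have hG' : 2 / α < G + 1 := Nat.lt_floor_add_one _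
  have hd : (d : ℝ) ≤ 16 / (α ^ 3 * G) := Nat.floor_le (by positivity)
  have hd' : 16 / (α ^ 3 * G) < d + 1 := Nat.lt_floor_add_one _
  refine ⟨G, d, ?_, ?_⟩
  · rcases (Nat.cast_nonneg G : (0 : ℝ) ≤ G).eq_or_lt with hG0 | hG0
    · rw [← hG0, zero_mul]; positivity
    · calc (G * d : ℝ) ≤ G * (16 / (α ^ 3 * G)) := by gcongr
        _ = 16 / α ^ 3 := by field_simp
  · have hsmall : G * (K / (d + 1)) ≤ α * K / 4 := by
      rcases (Nat.cast_nonneg G : (0 : ℝ) ≤ G).eq_or_lt with hG0 | hG0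
      · rw [← hG0, zero_mul]; positivity
      · calc G * (K / (d + 1)) ≤ G * (K / (16 / (α ^ 3 * G))) := by gcongr
          _ = α ^ 3 * K * (G * G) / 16 := by field_simp
          _ ≤ α ^ 3 * K * ((2 / α) * (2 / α)) / 16 := by gcongr
          _ = α * K / 4 := by field_simp; ring
    have hhalf : K / (G + 1) < α * K / 2 := by
      calc K / (G + 1) < K / (2 / α) := by gcongr
        _ = α * K / 2 := by field_simp
    have hlarge : 2 / α + 1 < α * K / 4 := by
      have := mul_lt_mul_of_pos_left hK hα
      field_simp at this ⊢
      linarith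
    linarith

lemma frequently_lt_card_window {A : Set ℕ} {β : ℝ} (hβ : β < upperBanachDensity A) :
    ∃ᶠ K : ℕ in atTop, ∃ x, β * K < Nat.card (A ∩ Set.Ioc x (x + K) : Set ℕ) := by
  have hcobdd : IsCoboundedUnder (· ≤ ·) atTop
      (fun K : ℕ => ⨆ x : ℕ, (Nat.card (A ∩ Set.Ioc x (x + K) : Set ℕ) : ℝ) / K) :=
    isCoboundedUnder_le_of_le atTop fun K => Real.iSup_nonneg fun x => by positivity
  refine ((frequently_lt_of_lt_limsup hcobdd hβ).and_eventually (eventually_gt_atTop 0)).mono ?_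
  rintro K ⟨hK, hKpos⟩
  obtain ⟨x, hx⟩ := exists_lt_of_lt_ciSup hK
  exact ⟨x, (lt_div_iff₀ (by positivity)).1 hx⟩

lemma exists_dense_window_above {α : ℝ} {A : Set ℕ} (hd : α < upperBanachDensity A) (M : ℕ)
    (L : ℝ) : ∃ x K : ℕ, L < K ∧ ∃ S ⊆ Ioc x (x + K), (∀ a ∈ S, a ∈ A ∧ M < a) ∧ α * K ≤ #S := by
  classical
  obtain ⟨β, hαβ, hβ⟩ := exists_between hd
  obtain ⟨K, ⟨x, hx⟩, hKL, hKM⟩ := ((frequently_lt_card_window hβ).and_eventually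
    ((tendsto_natCast_atTop_atTop.eventually_gt_atTop L).and
      (tendsto_natCast_atTop_atTop.eventually_gt_atTop ((M + 1) / (β - α))))).exists
  set T : Finset ℕ := {a ∈ Ioc x (x + K) | a ∈ A}
  have hT : Nat.card (A ∩ Set.Ioc x (x + K) : Set ℕ) = #T := by
    rw [← Set.ncard_coe_finset, Nat.card_coe_set_eq]
    congr 1
    ext a
    simp [T, and_comm]
  have hlow : #T ≤ #{a ∈ T | M < a} + (M + 1) := by
    rw [← card_filter_add_card_filter_not (fun a => M < a)]
    gcongr
    calc #{a ∈ T | ¬M < a} ≤ #(range (M + 1)) :=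
          card_le_card fun a ha => mem_range.2 (by simp only [not_lt, mem_filter] at ha; omega)
      _ = M + 1 := card_range _
  refine ⟨x, K, hKL, {a ∈ T | M < a}, (filter_subset _ _).trans (filter_subset _ _), ?_, ?_⟩
  · intro a ha
    simp only [T, mem_filter] at ha
    exact ⟨ha.1.2, ha.2⟩
  · rw [div_lt_iff₀ (sub_pos.2 hαβ)] at hKM
    have : (#T : ℝ) ≤ #{a ∈ T | M < a} + (M + 1) := by exact_mod_cast hlow
    rw [hT] at hx
    linarith

lemma StrictMono.exists_succ_le {b : ℕ → ℕ} (hb : StrictMono b) {p q : ℕ}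
    (hp : p ∈ Set.range b) (hq : q ∈ Set.range b) (hpq : p < q) : ∃ n, b n = p ∧ b (n + 1) ≤ q := by
  obtain ⟨n, rfl⟩ := hp
  obtain ⟨m, rfl⟩ := hq
  exact ⟨n, rfl, hb.monotone (hb.lt_iff_lt.1 hpq)⟩

lemma mul_add_add_mul_sub {u w : ℕ} (g : ℕ) (h : u ≤ w) :
    u * (w + g) + g * (w - u) = w * (u + g) := by
  obtain ⟨c, rfl⟩ := Nat.exists_eq_add_of_le h
  rw [Nat.add_sub_cancel_left]
  ring

theorem stmt1_general (α : ℝ) (hα0 : 0 < α) (A : Set ℕ)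
    (hd : α < upperBanachDensity A)
    (b : ℕ → ℕ) (hb : StrictMono b)
    (hrange : ∀ m, m ∈ Set.range b ↔ ∃ a ∈ A, ∃ a' ∈ A, m = a * a') :
    ∀ N : ℕ, ∃ n, N ≤ n ∧ ((b (n + 1) : ℝ) - b n) ≤ 16 / α ^ 3 := by
  intro N
  obtain ⟨x, K, hK, S, hSI, hSA, hcard⟩ := exists_dense_window_above hd (b N) (8 / α ^ 2 + 4 / α)
  obtain ⟨G, d, hGd, hscales⟩ := exists_scales hα0 hK
  obtain ⟨g, hg, u, w, hu, hug, hw, hwg, huw, hwu⟩ :=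
    exists_translate_pair hSI (hscales.trans_le hcard)
  obtain ⟨hg1, hgG⟩ := mem_Icc.1 hg
  have hprod := mul_add_add_mul_sub g huw.le
  have hgap_pos : 0 < g * (w - u) := Nat.mul_pos hg1 (Nat.sub_pos_of_lt huw)
  obtain ⟨n, hn, hsucc⟩ := hb.exists_succ_le
    ((hrange _).2 ⟨u, (hSA u hu).1, w + g, (hSA _ hwg).1, rfl⟩)
    ((hrange _).2 ⟨w, (hSA w hw).1, u + g, (hSA _ hug).1, rfl⟩) (by omega)
  have hNn : b N < b n := (hSA u hu).2.trans_le (hn ▸ Nat.le_mul_of_pos_right u (by omega))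
  refine ⟨n, (hb.lt_iff_lt.1 hNn).le, ?_⟩
  calc ((b (n + 1) : ℝ) - b n) ≤ ((g * (w - u) : ℕ) : ℝ) := by
        rw [sub_le_iff_le_add']; exact_mod_cast (by omega : b (n + 1) ≤ b n + g * (w - u))
    _ ≤ ((G * d : ℕ) : ℝ) := Nat.cast_le.2 (Nat.mul_le_mul hgG (by omega))
    _ ≤ 16 / α ^ 3 := by push_cast; exact hGd

/-- If `d*(A) > α` then the increasing enumeration `b` of `B = A·A`
satisfies `b (n+1) - b n ≤ 16 α⁻³` infinitely often. -/
theorem stmt1 (α : ℝ) (hα0 : 0 < α) (hα1 : α < 1) (A : Set ℕ) (hA : 0 ∉ A)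
    (hd : α < upperBanachDensity A)
    (b : ℕ → ℕ) (hb : StrictMono b)
    (hrange : ∀ m, m ∈ Set.range b ↔ ∃ a ∈ A, ∃ a' ∈ A, m = a * a') :
    ∀ N : ℕ, ∃ n, N ≤ n ∧ ((b (n + 1) : ℝ) - b n) ≤ 16 / α ^ 3 :=
  stmt1_general α hα0 A hd b hb hrange
end

section
/- For every 0 < α < 1 there exists a set A of positive integers with upper Banach density d*(A) > α such that any two distinct elements of the product set B = A·A differ by at least 2^{-12}·α^{-3}; that is, b_{n+1} - b_n ≫ α^{-3} for all n. -/
open Set Pointwise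

lemma le_upperBanachDensity {A : Set ℕ} {β : ℝ}
    (h : ∀ T : ℕ, ∃ K ≥ T, 0 < K ∧ ∃ x : ℕ, ∃ s : Finset ℕ,
      ↑s ⊆ A ∩ Ioc x (x + K) ∧ β * K ≤ s.card) :
    β ≤ upperBanachDensity A := by
  have hwindow (K x : ℕ) : (Nat.card ↑(A ∩ Ioc x (x + K)) : ℝ) / K ≤ 1 := by
    rcases K.eq_zero_or_pos with rfl | hK
    · simp
    rw [div_le_one (by exact_mod_cast hK), Nat.card_coe_set_eq]
    have := ncard_le_ncard (inter_subset_right (s := A)) (finite_Ioc x (x + K))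
    simp only [ncard_eq_toFinset_card', toFinset_Ioc, Nat.card_Ioc, add_tsub_cancel_left] at this
    exact_mod_cast this
  refine Filter.le_limsup_of_frequently_le (Filter.frequently_atTop.2 fun T => ?_)
    (Filter.isBoundedUnder_of ⟨1, fun K => ciSup_le (hwindow K)⟩)
  obtain ⟨K, hTK, hK, x, s, hs, hβ⟩ := h T
  refine ⟨K, hTK, le_ciSup_of_le ⟨1, forall_mem_range.2 (hwindow K)⟩ x ?_⟩
  rw [le_div_iff₀ (by exact_mod_cast hK), Nat.card_coe_set_eq]
  refine hβ.trans ?_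
  rw [← ncard_coe_finset]
  exact_mod_cast ncard_le_ncard hs ((finite_Ioc _ _).inter_of_right _)

lemma upperBanachDensity_multiples {c : ℕ} (hc : 0 < c) :
    1 / (c : ℝ) ≤ upperBanachDensity {n | 0 < n ∧ c ∣ n} := by
  refine le_upperBanachDensity fun T => ⟨c * (T + 1), by nlinarith, by positivity, 0,
    (Finset.range (T + 1)).image fun k => c * (k + 1), ?_, ?_⟩
  · intro n hn
    simp only [Finset.coe_image, Finset.coe_range, mem_image, mem_Iio] at hn
    obtain ⟨k, hk, rfl⟩ := hn
    refine ⟨⟨by positivity, dvd_mul_right _ _⟩, by positivity, ?_⟩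
    simp only [zero_add]
    gcongr
    omega
  · rw [Finset.card_image_of_injective _ fun a b h => by simpa [hc.ne'] using h, Finset.card_range]
    push_cast
    field_simp
    rfl

lemma multiples_mul_pairwise (c : ℕ) :
    ({n | 0 < n ∧ c ∣ n} * {n | 0 < n ∧ c ∣ n} : Set ℕ).Pairwise
      fun m m' => ((c ^ 2 : ℕ) : ℤ) ≤ |(m : ℤ) - m'| := by
  rintro _ ⟨a, ⟨-, ha⟩, a', ⟨-, ha'⟩, rfl⟩ _ ⟨b, ⟨-, hb⟩, b', ⟨-, hb'⟩, rfl⟩ hne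
  have hdvd (x y : ℕ) (hx : c ∣ x) (hy : c ∣ y) : ((c ^ 2 : ℕ) : ℤ) ∣ ((x * y : ℕ) : ℤ) :=
    Int.natCast_dvd_natCast.2 (pow_two c ▸ mul_dvd_mul hx hy)
  exact Int.le_of_dvd (abs_pos.2 (sub_ne_zero.2 (by exact_mod_cast hne)))
    ((dvd_abs _ _).2 (dvd_sub (hdvd a a' ha ha') (hdvd b b' hb hb')))

lemma eq_and_eq_of_mul_add_eq_mul_add {M a a' r r' : ℕ} (hr : r < M) (hr' : r' < M)
    (h : M * a + r = M * a' + r') : a = a' ∧ r = r' := by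
  have hM : 0 < M := by omega
  have hdiv := congrArg (· / M) h
  have hmod := congrArg (· % M) h
  simp only [Nat.mul_add_div hM, Nat.div_eq_of_lt hr, Nat.div_eq_of_lt hr', Nat.mul_add_mod,
    Nat.mod_eq_of_lt hr, Nat.mod_eq_of_lt hr', add_zero] at hdiv hmod
  exact ⟨hdiv, hmod⟩

lemma le_abs_add_mul {d m Q δ : ℤ} (hd : δ ≤ |d|) (hQ : |d| + δ ≤ Q) : δ ≤ |d + Q * m| := by
  rcases eq_or_ne m 0 with rfl | hm
  · simpa using hd
  have hQm : Q ≤ |Q * m| := by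
    rw [abs_mul]
    exact (le_abs_self Q).trans (le_mul_of_one_le_right (abs_nonneg Q) (Int.one_le_abs hm))
  rw [add_comm]
  linarith [abs_sub_abs_le_abs_add (Q * m) d]

lemma le_abs_sub_of_add_le {a b g : ℕ} (h : a + g ≤ b) : (g : ℤ) ≤ |(a : ℤ) - b| := by
  rw [abs_sub_comm]
  exact le_abs.2 (Or.inl (by omega))

lemma le_abs_mul_sub_mul_of_add_ne {N L g w w' v v' : ℕ} (hw : w < L) (hw' : w' < L)
    (hv : v < L) (hv' : v' < L) (hN : L ^ 2 + g ≤ N) (hs : w + w' ≠ v + v') :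
    (g : ℤ) ≤ |(((N + w) * (N + w') : ℕ) : ℤ) - ((N + v) * (N + v') : ℕ)| := by
  have hsplit : (((N + w) * (N + w') : ℕ) : ℤ) - ((N + v) * (N + v') : ℕ) =
      N * (((w + w' : ℕ) : ℤ) - (v + v' : ℕ)) + (((w * w' : ℕ) : ℤ) - (v * v' : ℕ)) := by
    push_cast; ring
  have hlead : (N : ℤ) ≤ |N * (((w + w' : ℕ) : ℤ) - (v + v' : ℕ))| := by
    rw [abs_mul, Nat.abs_cast]
    exact le_mul_of_one_le_right (Nat.cast_nonneg _)
      (Int.one_le_abs (sub_ne_zero.2 (by exact_mod_cast hs)))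
  have hrest : |((w * w' : ℕ) : ℤ) - (v * v' : ℕ)| ≤ L ^ 2 :=
    (abs_sub_lt_of_nonneg_of_lt (Nat.cast_nonneg _)
      (by rw [sq]; exact_mod_cast Nat.mul_lt_mul'' hw hw') (Nat.cast_nonneg _)
      (by rw [sq]; exact_mod_cast Nat.mul_lt_mul'' hv hv')).le
  have : ((L ^ 2 + g : ℕ) : ℤ) ≤ N := by exact_mod_cast hN
  push_cast at this
  rw [hsplit]
  linarith [abs_sub_abs_le_abs_add (N * (((w + w' : ℕ) : ℤ) - (v + v' : ℕ)))
    (((w * w' : ℕ) : ℤ) - (v * v' : ℕ))]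

lemma le_abs_mul_sub_mul_of_mul_add_le {N M L L' g w w' v v' : ℕ} (hw : w < L) (hw' : w' < L')
    (hv : v < L) (hv' : v' < L') (hgN : g ≤ N) (hM : (N + L) * L' + g ≤ M)
    (hne : (N + w) * (M + w') ≠ (N + v) * (M + v')) :
    (g : ℤ) ≤ |(((N + w) * (M + w') : ℕ) : ℤ) - ((N + v) * (M + v') : ℕ)| := by
  rcases eq_or_ne w v with rfl | hwv
  · have hw'v' : (w' : ℤ) - v' ≠ 0 := sub_ne_zero.2 fun h => hne (by rw [Nat.cast_injective h])
    have hsplit : (((N + w) * (M + w') : ℕ) : ℤ) - ((N + w) * (M + v') : ℕ) =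
        (N + w : ℕ) * ((w' : ℤ) - v') := by
      push_cast; ring
    rw [hsplit, abs_mul, Nat.abs_cast]
    calc (g : ℤ) ≤ (N + w : ℕ) := by exact_mod_cast hgN.trans (Nat.le_add_right N w)
      _ ≤ _ := le_mul_of_one_le_right (Nat.cast_nonneg _) (Int.one_le_abs hw'v')
  have hsplit : (((N + w) * (M + w') : ℕ) : ℤ) - ((N + v) * (M + v') : ℕ) =
      M * ((w : ℤ) - v) + (N * ((w' : ℤ) - v') + (((w * w' : ℕ) : ℤ) - (v * v' : ℕ))) := by
    push_cast; ring
  have hlead : (M : ℤ) ≤ |M * ((w : ℤ) - v)| := by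
    rw [abs_mul, Nat.abs_cast]
    exact le_mul_of_one_le_right (Nat.cast_nonneg _)
      (Int.one_le_abs (sub_ne_zero.2 (by exact_mod_cast hwv)))
  have hmid : |(N : ℤ) * ((w' : ℤ) - v')| ≤ N * L' := by
    rw [abs_mul, Nat.abs_cast]
    exact mul_le_mul_of_nonneg_left (abs_sub_lt_of_nonneg_of_lt (Nat.cast_nonneg _)
      (by exact_mod_cast hw') (Nat.cast_nonneg _) (by exact_mod_cast hv')).le (Nat.cast_nonneg _)
  have hlow : |((w * w' : ℕ) : ℤ) - (v * v' : ℕ)| ≤ L * L' :=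
    (abs_sub_lt_of_nonneg_of_lt (Nat.cast_nonneg _) (by exact_mod_cast Nat.mul_lt_mul'' hw hw')
      (Nat.cast_nonneg _) (by exact_mod_cast Nat.mul_lt_mul'' hv hv')).le
  have : (((N + L) * L' + g : ℕ) : ℤ) ≤ M := by exact_mod_cast hM
  push_cast at this
  rw [hsplit]
  linarith [abs_sub_abs_le_abs_add (M * ((w : ℤ) - v))
    (N * ((w' : ℤ) - v') + (((w * w' : ℕ) : ℤ) - (v * v' : ℕ))),
    abs_add_le ((N : ℤ) * ((w' : ℤ) - v')) (((w * w' : ℕ) : ℤ) - (v * v' : ℕ))]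

def erdosTuran (p i : ℕ) : ℕ := 2 * p * i + i ^ 2 % p

lemma erdosTuran_lt {p i : ℕ} (hi : i < p) : erdosTuran p i < 2 * p ^ 2 := by
  have := Nat.mod_lt (i ^ 2) (by omega : 0 < p)
  have : 2 * p * (i + 1) ≤ 2 * p * p := by gcongr; omega
  unfold erdosTuran
  linarith [sq p]

lemma erdosTuran_add_lt_of_lt {p i j : ℕ} (hp : 0 < p) (hij : i < j) :
    erdosTuran p i + p < erdosTuran p j := by
  have := Nat.mod_lt (i ^ 2) hp
  have : 2 * p * (i + 1) ≤ 2 * p * j := by gcongr; omega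
  unfold erdosTuran
  linarith [Nat.zero_le (j ^ 2 % p)]

lemma erdosTuran_strictMono {p : ℕ} (hp : 0 < p) : StrictMono (erdosTuran p) :=
  fun _ _ hij => (Nat.le_add_right _ _).trans_lt (erdosTuran_add_lt_of_lt hp hij)

lemma erdosTuran_sidon {p i j i' j' : ℕ} (hp : p.Prime) (hp2 : p ≠ 2)
    (hi : i < p) (hj : j < p) (hi' : i' < p)
    (h : erdosTuran p i + erdosTuran p j = erdosTuran p i' + erdosTuran p j') :
    i' = i ∨ i' = j := by
  have := Fact.mk hp
  have hmod (n : ℕ) := Nat.mod_lt (n ^ 2) hp.pos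
  obtain ⟨hsum, hsq⟩ : i + j = i' + j' ∧ i ^ 2 % p + j ^ 2 % p = i' ^ 2 % p + j' ^ 2 % p :=
    eq_and_eq_of_mul_add_eq_mul_add (M := 2 * p) (by linarith [hmod i, hmod j])
      (by linarith [hmod i', hmod j']) (by unfold erdosTuran at h; linarith)
  have hsumZ : (i + j : ZMod p) = i' + j' := by exact_mod_cast congrArg (Nat.cast : ℕ → ZMod p) hsum
  have hsqZ : (i ^ 2 + j ^ 2 : ZMod p) = i' ^ 2 + j' ^ 2 := by
    simpa [ZMod.natCast_mod] using congrArg (Nat.cast : ℕ → ZMod p) hsq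
  have h2 : (2 : ZMod p) ≠ 0 := Ring.two_ne_zero (by rwa [ZMod.ringChar_zmod_n])
  have hroot : (2 : ZMod p) * ((i' - i) * (i' - j)) = 0 := by
    linear_combination (i + j + i' + j' - 2 * (i' : ZMod p)) * hsumZ - hsqZ
  have hcast {a b : ℕ} (ha : a < p) (hb : b < p) (hab : (a : ZMod p) = b) : a = b := by
    simpa [Nat.mod_eq_of_lt ha, Nat.mod_eq_of_lt hb] using
      (ZMod.natCast_eq_natCast_iff' a b p).1 hab
  rcases mul_eq_zero.1 ((mul_eq_zero.1 hroot).resolve_left h2) with h | h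
  · exact Or.inl (hcast hi' hi (sub_eq_zero.1 h))
  · exact Or.inr (hcast hi' hj (sub_eq_zero.1 h))

def etOffset (p i k : ℕ) : ℕ := 1 + erdosTuran p i + 8 * p ^ 2 * k

def etBlock (p t : ℕ) : Finset ℕ :=
  (Finset.range p ×ˢ Finset.range t).image fun x => etOffset p x.1 x.2

section Offsets

variable {p : ℕ}

lemma mem_etBlock {t w : ℕ} : w ∈ etBlock p t ↔ ∃ i < p, ∃ k < t, etOffset p i k = w := by
  simp [etBlock, and_assoc]

lemma pos_of_mem_etBlock {t w : ℕ} (hw : w ∈ etBlock p t) : 0 < w := by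
  obtain ⟨i, -, k, -, rfl⟩ := mem_etBlock.1 hw
  unfold etOffset
  omega

lemma lt_of_mem_etBlock {t w : ℕ} (hw : w ∈ etBlock p t) : w < 8 * p ^ 2 * t := by
  obtain ⟨i, hi, k, hk, rfl⟩ := mem_etBlock.1 hw
  have := erdosTuran_lt hi
  have : 8 * p ^ 2 * (k + 1) ≤ 8 * p ^ 2 * t := by gcongr; omega
  unfold etOffset
  linarith

lemma card_etBlock (hp : 0 < p) (t : ℕ) : (etBlock p t).card = p * t := by
  rw [etBlock, Finset.card_image_of_injOn, Finset.card_product, Finset.card_range,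
    Finset.card_range]
  rintro ⟨i, k⟩ hik ⟨i', k'⟩ hik' h
  simp only [Finset.coe_product, Finset.coe_range, mem_prod, mem_Iio] at hik hik'
  have hlt (j : ℕ) (hj : j < p) : 1 + erdosTuran p j < 8 * p ^ 2 := by
    linarith [erdosTuran_lt hj, pow_pos hp 2]
  simp only [etOffset] at h
  obtain ⟨rfl, hf⟩ := eq_and_eq_of_mul_add_eq_mul_add (a := k) (a' := k') (hlt i hik.1)
    (hlt i' hik'.1) (by linarith)
  simp [(erdosTuran_strictMono hp).injective (by omega : erdosTuran p i = erdosTuran p i')]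

lemma erdosTuran_add_eq_of_etOffset_add_eq {i j i' j' k l k' l' : ℕ}
    (hi : i < p) (hj : j < p) (hi' : i' < p) (hj' : j' < p)
    (h : etOffset p i k + etOffset p j l = etOffset p i' k' + etOffset p j' l') :
    erdosTuran p i + erdosTuran p j = erdosTuran p i' + erdosTuran p j' := by
  have hlt {a b : ℕ} (ha : a < p) (hb : b < p) :
      2 + erdosTuran p a + erdosTuran p b < 8 * p ^ 2 := by
    linarith [erdosTuran_lt ha, erdosTuran_lt hb, pow_pos (by omega : 0 < p) 2]
  have := (eq_and_eq_of_mul_add_eq_mul_add (a := k + l) (a' := k' + l') (hlt hi hj) (hlt hi' hj')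
    (by simp only [etOffset] at h; linarith)).2
  omega

lemma le_abs_etOffset_sub_etOffset_of_ne {i k k' : ℕ} (h : etOffset p i k ≠ etOffset p i k') :
    8 * (p : ℤ) ^ 2 ≤ |(etOffset p i k : ℤ) - etOffset p i k'| := by
  have hk : (k : ℤ) - k' ≠ 0 := sub_ne_zero.2 fun hkk => h (by rw [Nat.cast_injective hkk])
  have : (etOffset p i k : ℤ) - etOffset p i k' = 8 * p ^ 2 * ((k : ℤ) - k') := by
    unfold etOffset; push_cast; ring
  rw [this, abs_mul, abs_of_nonneg (by positivity)]
  nlinarith [Int.one_le_abs hk, sq_nonneg (p : ℤ)]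

lemma le_abs_etOffset_sub_etOffset {i i' k k' : ℕ} (hi : i < p) (hi' : i' < p)
    (h : etOffset p i k ≠ etOffset p i' k') :
    (p : ℤ) ≤ |(etOffset p i k : ℤ) - etOffset p i' k'| := by
  rcases eq_or_ne i i' with rfl | hii'
  · nlinarith [le_abs_etOffset_sub_etOffset_of_ne h, sq_nonneg ((p : ℤ) - 1)]
  have hgap : (p : ℤ) < |(erdosTuran p i : ℤ) - erdosTuran p i'| := by
    have hp : 0 < p := by omega
    rcases hii'.lt_or_gt with hlt | hlt
    · have := erdosTuran_add_lt_of_lt hp hlt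
      exact lt_abs.2 (Or.inr (by omega))
    · have := erdosTuran_add_lt_of_lt hp hlt
      exact lt_abs.2 (Or.inl (by omega))
  have hsmall : |(erdosTuran p i : ℤ) - erdosTuran p i'| < 2 * p ^ 2 :=
    abs_sub_lt_of_nonneg_of_lt (Nat.cast_nonneg _) (by exact_mod_cast erdosTuran_lt hi)
      (Nat.cast_nonneg _) (by exact_mod_cast erdosTuran_lt hi')
  have : (etOffset p i k : ℤ) - etOffset p i' k' =
      ((erdosTuran p i : ℤ) - erdosTuran p i') + 8 * p ^ 2 * ((k : ℤ) - k') := by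
    unfold etOffset; push_cast; ring
  rw [this]
  exact le_abs_add_mul hgap.le (by nlinarith)

lemma le_abs_etOffset_mul_sub (hp : p.Prime) (hp2 : p ≠ 2) {i j i' j' k l k' l' : ℕ}
    (hi : i < p) (hj : j < p) (hi' : i' < p) (hj' : j' < p)
    (hsum : etOffset p i k + etOffset p j l = etOffset p i' k' + etOffset p j' l')
    (hne : etOffset p i k * etOffset p j l ≠ etOffset p i' k' * etOffset p j' l') :
    ((8 * p ^ 3 : ℕ) : ℤ) ≤ |((etOffset p i k * etOffset p j l : ℕ) : ℤ) -
      (etOffset p i' k' * etOffset p j' l' : ℕ)| := by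
  set w := etOffset p i k
  set w' := etOffset p j l
  set v := etOffset p i' k'
  set v' := etOffset p j' l'
  have hwv : w ≠ v := by rintro hwv; apply hne; rw [hwv, show w' = v' by omega]
  have hw'v : w' ≠ v := by rintro hw'v; apply hne; rw [hw'v, show w = v' by omega, mul_comm]
  have hfactor : ((w * w' : ℕ) : ℤ) - (v * v' : ℕ) = ((w : ℤ) - v) * ((w' : ℤ) - v) := by
    push_cast
    linear_combination (v : ℤ) * (by exact_mod_cast hsum : (w : ℤ) + w' = v + v')
  rw [hfactor, abs_mul]
  push_cast
  rcases erdosTuran_sidon hp hp2 hi hj hi' (erdosTuran_add_eq_of_etOffset_add_eq hi hj hi' hj' hsum)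
    with rfl | rfl
  · nlinarith [le_abs_etOffset_sub_etOffset_of_ne hwv, le_abs_etOffset_sub_etOffset hj hi hw'v,
      abs_nonneg ((w : ℤ) - v)]
  · nlinarith [le_abs_etOffset_sub_etOffset_of_ne hw'v, le_abs_etOffset_sub_etOffset hi hj hwv,
      abs_nonneg ((w' : ℤ) - v), abs_nonneg ((w : ℤ) - v)]

end Offsets

def etStart (p : ℕ) : ℕ → ℕ
  | 0 => 8 * p ^ 3
  | t + 1 => 4 * etStart p t ^ 2 + 8 * p ^ 3

section Growth

variable {p : ℕ}

lemma le_etStart (t : ℕ) : 8 * p ^ 3 ≤ etStart p t := by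
  cases t <;> simp [etStart]

lemma etStart_mono : Monotone (etStart p) :=
  monotone_nat_of_le_succ fun t => by
    simp only [etStart]
    linarith [Nat.le_self_pow two_ne_zero (etStart p t), Nat.zero_le (p ^ 3)]

lemma eight_mul_sq_le_etStart (t : ℕ) : 8 * p ^ 2 ≤ etStart p t := by
  refine le_trans ?_ (le_etStart t)
  rcases p.eq_zero_or_pos with rfl | hp
  · simp
  · exact Nat.mul_le_mul_left 8 (Nat.pow_le_pow_right hp (by norm_num))

lemma sq_add_le_etStart (t : ℕ) : (8 * p ^ 2 * t) ^ 2 + 8 * p ^ 3 ≤ etStart p t := by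
  induction t with
  | zero => simp [etStart]
  | succ t ih =>
    have hlen : 8 * p ^ 2 * (t + 1) ≤ 2 * etStart p t := by
      linarith [Nat.le_self_pow two_ne_zero (8 * p ^ 2 * t), eight_mul_sq_le_etStart (p := p) t,
        Nat.zero_le (p ^ 3)]
    calc (8 * p ^ 2 * (t + 1)) ^ 2 + 8 * p ^ 3 ≤ (2 * etStart p t) ^ 2 + 8 * p ^ 3 := by gcongr
      _ = etStart p (t + 1) := by simp only [etStart]; ring

lemma mul_le_etStart (t : ℕ) : 8 * p ^ 2 * t ≤ etStart p t :=
  (Nat.le_self_pow two_ne_zero _).trans ((Nat.le_add_right _ _).trans (sq_add_le_etStart t))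

lemma etStart_growth {t t' : ℕ} (htt' : t < t') :
    (etStart p t + 8 * p ^ 2 * t) * (8 * p ^ 2 * t') + 8 * p ^ 3 ≤ etStart p t' := by
  obtain ⟨s, rfl⟩ := Nat.exists_eq_add_of_lt htt'
  have hs := etStart_mono (p := p) (Nat.le_add_right t s)
  have h1 : etStart p t + 8 * p ^ 2 * t ≤ 2 * etStart p (t + s) := by
    linarith [mul_le_etStart (p := p) t]
  have h2 : 8 * p ^ 2 * (t + s + 1) ≤ 2 * etStart p (t + s) := by
    linarith [mul_le_etStart (p := p) (t + s), eight_mul_sq_le_etStart (p := p) (t + s)]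
  calc (etStart p t + 8 * p ^ 2 * t) * (8 * p ^ 2 * (t + s + 1)) + 8 * p ^ 3
      ≤ (2 * etStart p (t + s)) * (2 * etStart p (t + s)) + 8 * p ^ 3 := by gcongr
    _ = etStart p (t + s + 1) := by simp only [etStart]; ring

end Growth

def etSet (p : ℕ) : Set ℕ := {n | ∃ t, ∃ w ∈ etBlock p t, n = etStart p t + w}

section EtSet

variable {p : ℕ}

lemma add_le_two_mul_etStart {t w : ℕ} (hw : w ∈ etBlock p t) :
    etStart p t + w ≤ 2 * etStart p t := by
  linarith [lt_of_mem_etBlock hw, mul_le_etStart (p := p) t]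

lemma add_le_mul_of_toLex_lt {t t' r r' a a' b b' : ℕ} (htt' : t ≤ t')
    (ha : a ≤ 2 * etStart p t) (ha' : a' ≤ 2 * etStart p t')
    (hb : etStart p r < b) (hb' : etStart p r' < b') (hlex : toLex (t', t) < toLex (r', r)) :
    a * a' + 8 * p ^ 3 ≤ b * b' := by
  have ha₂ : a ≤ 2 * etStart p t' := ha.trans (by gcongr; exact etStart_mono htt')
  rcases Prod.Lex.toLex_lt_toLex.1 hlex with h | ⟨hr', h⟩
  · dsimp only at h
    calc a * a' + 8 * p ^ 3 ≤ (2 * etStart p t') * (2 * etStart p t') + 8 * p ^ 3 := by gcongr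
      _ = etStart p (t' + 1) := by simp only [etStart]; ring
      _ ≤ etStart p r' := etStart_mono h
      _ ≤ b * b' := by nlinarith
  · dsimp only at hr' h
    subst hr'
    have hr : 4 * etStart p t + 8 * p ^ 3 ≤ etStart p r := by
      have := etStart_mono (p := p) h
      simp only [etStart] at this
      linarith [Nat.le_self_pow two_ne_zero (etStart p t)]
    calc a * a' + 8 * p ^ 3 ≤ (2 * etStart p t) * (2 * etStart p t') + 8 * p ^ 3 := by gcongr
      _ ≤ etStart p r * etStart p t' + etStart p r := by
        nlinarith [Nat.mul_le_mul_right (etStart p t') hr, Nat.zero_le (p ^ 3 * etStart p t')]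
      _ ≤ b * b' := by nlinarith

lemma le_abs_sub_of_toLex_eq (hp : p.Prime) (hp2 : p ≠ 2) {t t' w w' v v' : ℕ} (htt' : t ≤ t')
    (hw : w ∈ etBlock p t) (hw' : w' ∈ etBlock p t') (hv : v ∈ etBlock p t)
    (hv' : v' ∈ etBlock p t')
    (hne : (etStart p t + w) * (etStart p t' + w') ≠ (etStart p t + v) * (etStart p t' + v')) :
    ((8 * p ^ 3 : ℕ) : ℤ) ≤ |((((etStart p t + w) * (etStart p t' + w')) : ℕ) : ℤ) -
      ((etStart p t + v) * (etStart p t' + v') : ℕ)| := by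
  rcases htt'.lt_or_eq with hlt | rfl
  · exact le_abs_mul_sub_mul_of_mul_add_le (lt_of_mem_etBlock hw) (lt_of_mem_etBlock hw')
      (lt_of_mem_etBlock hv) (lt_of_mem_etBlock hv') (le_etStart t) (etStart_growth hlt) hne
  by_cases hs : w + w' = v + v'
  · have hsame : (((etStart p t + w) * (etStart p t + w') : ℕ) : ℤ) -
        ((etStart p t + v) * (etStart p t + v') : ℕ) = ((w * w' : ℕ) : ℤ) - (v * v' : ℕ) := by
      push_cast
      linear_combination (etStart p t : ℤ) * (by exact_mod_cast hs : (w : ℤ) + w' = v + v')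
    rw [hsame]
    obtain ⟨i, hi, k, -, rfl⟩ := mem_etBlock.1 hw
    obtain ⟨j, hj, l, -, rfl⟩ := mem_etBlock.1 hw'
    obtain ⟨i', hi', k', -, rfl⟩ := mem_etBlock.1 hv
    obtain ⟨j', hj', l', -, rfl⟩ := mem_etBlock.1 hv'
    have hexpand (a b : ℕ) : (etStart p t + a) * (etStart p t + b) =
        etStart p t * etStart p t + etStart p t * (a + b) + a * b := by ring
    exact le_abs_etOffset_mul_sub hp hp2 hi hj hi' hj' hs fun h =>
      hne (by rw [hexpand, hexpand, hs, h])
  · exact le_abs_mul_sub_mul_of_add_ne (lt_of_mem_etBlock hw) (lt_of_mem_etBlock hw')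
      (lt_of_mem_etBlock hv) (lt_of_mem_etBlock hv') (sq_add_le_etStart t) hs

lemma exists_etBlock_of_mem_mul {m : ℕ} (hm : m ∈ etSet p * etSet p) :
    ∃ t t', t ≤ t' ∧ ∃ w ∈ etBlock p t, ∃ w' ∈ etBlock p t',
      m = (etStart p t + w) * (etStart p t' + w') := by
  obtain ⟨_, ⟨t, w, hw, rfl⟩, _, ⟨t', w', hw', rfl⟩, rfl⟩ := hm
  rcases le_total t t' with h | h
  · exact ⟨t, t', h, w, hw, w', hw', rfl⟩
  · exact ⟨t', t, h, w', hw', w, hw, mul_comm _ _⟩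

lemma etSet_mul_pairwise (hp : p.Prime) (hp2 : p ≠ 2) :
    (etSet p * etSet p).Pairwise fun m m' => ((8 * p ^ 3 : ℕ) : ℤ) ≤ |(m : ℤ) - m'| := by
  intro m hm m' hm' hne
  obtain ⟨t, t', htt', w, hw, w', hw', rfl⟩ := exists_etBlock_of_mem_mul hm
  obtain ⟨r, r', hrr', v, hv, v', hv', rfl⟩ := exists_etBlock_of_mem_mul hm'
  rcases lt_trichotomy (toLex (t', t)) (toLex (r', r)) with hlt | heq | hgt
  · exact le_abs_sub_of_add_le (add_le_mul_of_toLex_lt htt' (add_le_two_mul_etStart hw)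
      (add_le_two_mul_etStart hw') (by linarith [pos_of_mem_etBlock hv])
      (by linarith [pos_of_mem_etBlock hv']) hlt)
  · obtain ⟨rfl, rfl⟩ := Prod.ext_iff.1 (toLex.injective heq)
    exact le_abs_sub_of_toLex_eq hp hp2 htt' hw hw' hv hv' hne
  · rw [abs_sub_comm]
    exact le_abs_sub_of_add_le (add_le_mul_of_toLex_lt hrr' (add_le_two_mul_etStart hv)
      (add_le_two_mul_etStart hv') (by linarith [pos_of_mem_etBlock hw])
      (by linarith [pos_of_mem_etBlock hw']) hgt)

lemma upperBanachDensity_etSet (hp : 0 < p) : 1 / (8 * p : ℝ) ≤ upperBanachDensity (etSet p) := by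
  refine le_upperBanachDensity fun T => ⟨8 * p ^ 2 * (T + 1), by nlinarith [pow_pos hp 2],
    by positivity, etStart p (T + 1), (etBlock p (T + 1)).image (etStart p (T + 1) + ·), ?_, ?_⟩
  · intro n hn
    simp only [Finset.coe_image, mem_image, Finset.mem_coe] at hn
    obtain ⟨w, hw, rfl⟩ := hn
    exact ⟨⟨T + 1, w, hw, rfl⟩, by linarith [pos_of_mem_etBlock hw],
      by linarith [lt_of_mem_etBlock hw]⟩
  · rw [Finset.card_image_of_injective _ (add_right_injective _), card_etBlock hp]
    push_cast
    field_simp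
    rfl

end EtSet

lemma exists_prime_lt_inv_le_cube {α : ℝ} (hα0 : 0 < α) (hα : α < 1 / 32) :
    ∃ p : ℕ, p.Prime ∧ p ≠ 2 ∧ α < 1 / (8 * p) ∧ 1 / (2 ^ 12 * α ^ 3) ≤ 8 * p ^ 3 := by
  set n := ⌈1 / (32 * α)⌉₊
  have hn : 1 < 1 / (32 * α) := by rw [lt_div_iff₀ (by positivity)]; linarith
  have hn2 : 2 ≤ n := Nat.lt_ceil.2 (by exact_mod_cast hn)
  obtain ⟨p, hp, hnp, hpn⟩ := Nat.bertrand n (by omega)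
  have hnp' : (n : ℝ) < p := by exact_mod_cast hnp
  have hpn' : (p : ℝ) ≤ 2 * n := by exact_mod_cast hpn
  have hceil : (n : ℝ) < 1 / (32 * α) + 1 := Nat.ceil_lt_add_one (by positivity)
  have h32 : 32 * α * (1 / (32 * α)) = 1 := by field_simp
  have hp0 : (0 : ℝ) < p := by exact_mod_cast hp.pos
  have hlow : 1 ≤ 32 * α * p := by nlinarith [Nat.le_ceil (1 / (32 * α))]
  refine ⟨p, hp, by omega, ?_, ?_⟩
  · rw [lt_div_iff₀ (by positivity)]
    nlinarith
  · rw [div_le_iff₀ (by positivity)]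
    nlinarith [one_le_pow₀ (n := 3) hlow]

lemma exists_nat_lt_inv_le_sq {α : ℝ} (hα0 : 1 / 32 ≤ α) (hα1 : α < 1) :
    ∃ c : ℕ, 0 < c ∧ α < 1 / c ∧ 1 / (2 ^ 12 * α ^ 3) ≤ c ^ 2 := by
  rcases lt_or_ge α (1 / 16) with h16 | h16
  · refine ⟨8, by norm_num, by norm_num; linarith, ?_⟩
    rw [div_le_iff₀ (by positivity)]
    push_cast
    nlinarith [pow_le_pow_left₀ (by norm_num) hα0 3]
  · refine ⟨1, by norm_num, by norm_num; linarith, ?_⟩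
    rw [div_le_iff₀ (by positivity)]
    push_cast
    nlinarith [pow_le_pow_left₀ (by norm_num) h16 3]

/-- For every `0 < α < 1` there is a set `A` with `d*(A) > α` such that any two
distinct elements of `B = A·A` differ by at least `2⁻¹² α⁻³`. -/
theorem stmt2 (α : ℝ) (hα0 : 0 < α) (hα1 : α < 1) :
    ∃ A : Set ℕ, 0 ∉ A ∧ α < upperBanachDensity A ∧
      ∀ m m' : ℕ, (∃ a ∈ A, ∃ a' ∈ A, m = a * a') →
        (∃ a ∈ A, ∃ a' ∈ A, m' = a * a') → m ≠ m' →
        1 / (2 ^ 12 * α ^ 3) ≤ |(m : ℝ) - m'| := by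
  suffices h : ∃ A : Set ℕ, ∃ g : ℕ, 0 ∉ A ∧ α < upperBanachDensity A ∧
      1 / (2 ^ 12 * α ^ 3) ≤ g ∧ (A * A).Pairwise fun m m' => (g : ℤ) ≤ |(m : ℤ) - m'| by
    obtain ⟨A, g, h0, hd, hg, hsep⟩ := h
    refine ⟨A, h0, hd, fun m m' ⟨a, ha, a', ha', hm⟩ ⟨b, hb, b', hb', hm'⟩ hne => ?_⟩
    have := hsep ⟨a, ha, a', ha', hm.symm⟩ ⟨b, hb, b', hb', hm'.symm⟩ hne
    exact hg.trans (by exact_mod_cast this)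
  rcases lt_or_ge α (1 / 32) with h32 | h32
  · obtain ⟨p, hp, hp2, hdensity, hgap⟩ := exists_prime_lt_inv_le_cube hα0 h32
    exact ⟨etSet p, 8 * p ^ 3, fun ⟨t, w, hw, h⟩ => (pos_of_mem_etBlock hw).ne' (by omega),
      hdensity.trans_le (upperBanachDensity_etSet hp.pos), by exact_mod_cast hgap,
      etSet_mul_pairwise hp hp2⟩
  · obtain ⟨c, hc, hdensity, hgap⟩ := exists_nat_lt_inv_le_sq h32 hα1
    exact ⟨{n | 0 < n ∧ c ∣ n}, c ^ 2, fun h => h.1.false,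
      hdensity.trans_le (upperBanachDensity_multiples hc), by exact_mod_cast hgap,
      multiples_mul_pairwise c⟩
end

section
/- For every 0 < α < 1 and every integer t ≥ 2, there exists a set A of positive integers with upper Banach density d*(A) > α such that b_{n+t} - b_n ≥ 2^{-22}·t²·α^{-4} for every n, where b_1 < b_2 < ... is the increasing enumeration of B = A·A. -/
open Finset Filter
open scoped Pointwise

theorem card_le_of_subset_Icc_of_mod_eq {V : Finset ℕ} {M X w r : ℕ}
    (hV : V ⊆ Icc w (w + X)) (hr : ∀ v ∈ V, v % M = r) : #V ≤ X / M + 1 := by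
  have hV' : ∀ v ∈ V, w ≤ v ∧ v ≤ w + X := fun v hv => mem_Icc.1 (hV hv)
  rw [← card_range (X / M + 1)]
  refine card_le_card_of_injOn (fun v => (v - w) / M) (fun v hv => ?_)
    fun v₁ h₁ v₂ h₂ hq => ?_
  · have := (hV' v hv).2
    simpa [Nat.lt_succ_iff] using Nat.div_le_div_right (c := M) (by omega : v - w ≤ X)
  · have hmod : (v₁ - w) % M = (v₂ - w) % M := by
      refine Nat.ModEq.add_left_cancel' w ?_
      rw [Nat.add_sub_cancel' (hV' v₁ h₁).1, Nat.add_sub_cancel' (hV' v₂ h₂).1]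
      exact (hr v₁ h₁).trans (hr v₂ h₂).symm
    have e₁ := Nat.div_add_mod (v₁ - w) M
    have e₂ := Nat.div_add_mod (v₂ - w) M
    have := (hV' v₁ h₁).1
    have := (hV' v₂ h₂).1
    simp only at hq
    rw [hq, hmod] at e₁
    omega

theorem card_le_of_subset_Icc_of_mod_mem {V D : Finset ℕ} {M X w : ℕ}
    (hV : V ⊆ Icc w (w + X)) (hD : ∀ v ∈ V, v % M ∈ D) : #V ≤ #D * (X / M + 1) := by
  rw [mul_comm]
  refine card_le_mul_card_image_of_maps_to hD _ fun r _ => ?_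
  exact card_le_of_subset_Icc_of_mod_eq ((filter_subset _ _).trans hV)
    fun v hv => (mem_filter.1 hv).2

theorem sub_sq_add_mul_le {s₁ σ₁ s₂ σ₂ : ℕ} (h₁ : σ₁ ≤ s₁) (hs : s₁ ≤ s₂)
    (hsum : s₁ + σ₁ = s₂ + σ₂) : (s₂ - s₁) ^ 2 + s₂ * σ₂ ≤ s₁ * σ₁ := by
  obtain ⟨e, rfl⟩ := Nat.exists_eq_add_of_le hs
  obtain rfl : σ₁ = σ₂ + e := by omega
  rw [Nat.add_sub_cancel_left]
  nlinarith

def IsSidon (R : Finset ℕ) : Prop :=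
  ∀ a ∈ R, ∀ b ∈ R, ∀ c ∈ R, ∀ d ∈ R, a + b = c + d → a = c ∧ b = d ∨ a = d ∧ b = c

section SumProducts

variable {M : ℕ} {R : Finset ℕ}

theorem mod_add_mod_of_mem (hR : ∀ r ∈ R, 2 * r < M) {s σ : ℕ} (hs : s % M ∈ R)
    (hσ : σ % M ∈ R) : s % M + σ % M = (s + σ) % M := by
  have := hR _ hs
  have := hR _ hσ
  rw [Nat.add_mod s σ M]
  exact (Nat.mod_eq_of_lt (by omega)).symm

/-- Residues in `R` lie below `M / 2`, so adding two of them causes no carry. -/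
theorem mod_eq_or_mod_eq_of_add_eq (hR : ∀ r ∈ R, 2 * r < M) (hS : IsSidon R)
    {s σ s' σ' : ℕ} (hs : s % M ∈ R) (hσ : σ % M ∈ R) (hs' : s' % M ∈ R) (hσ' : σ' % M ∈ R)
    (h : s' + σ' = s + σ) : s' % M = s % M ∨ s' % M = σ % M := by
  have := hS _ hs' _ hσ' _ hs _ hσ (by
    rw [mod_add_mod_of_mem hR hs' hσ', mod_add_mod_of_mem hR hs hσ, h])
  tauto

def productsWithSum (M : ℕ) (R : Finset ℕ) (u : ℕ) : Set ℕ :=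
  {c | ∃ s σ, s % M ∈ R ∧ σ % M ∈ R ∧ s + σ = u ∧ s * σ = c}

open Classical in
theorem card_productsWithSum_le (hR : ∀ r ∈ R, 2 * r < M) (hS : IsSidon R) (u c₀ L : ℕ) :
    #{c ∈ Ico c₀ (c₀ + L) | c ∈ productsWithSum M R u} ≤ min 2 #R * (Nat.sqrt L / M + 1) := by
  set S := {s ∈ range (u + 1) | u ≤ 2 * s ∧ s % M ∈ R ∧ (u - s) % M ∈ R ∧
    s * (u - s) ∈ Ico c₀ (c₀ + L)} with hS_def
  have hFS : #{c ∈ Ico c₀ (c₀ + L) | c ∈ productsWithSum M R u} ≤ #S := by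
    refine le_trans (card_le_card fun c hc => ?_) (card_image_le (f := fun s => s * (u - s)))
    obtain ⟨hcI, s, σ, hs, hσ, rfl, rfl⟩ := mem_filter.1 hc
    rcases le_total σ s with h | h
    · have hu : s + σ - s = σ := by omega
      exact mem_image.2
        ⟨s, mem_filter.2 ⟨by simp, by omega, hs, by rw [hu]; exact ⟨hσ, hcI⟩⟩, by rw [hu]⟩
    · have hu : s + σ - σ = s := by omega
      exact mem_image.2 ⟨σ, mem_filter.2 ⟨by simp, by omega, hσ,
        by rw [hu, mul_comm]; exact ⟨hs, hcI⟩⟩, by rw [hu, mul_comm]⟩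
  rcases S.eq_empty_or_nonempty with hempty | hne
  · rw [hempty, card_empty, Nat.le_zero] at hFS
    simp [hFS]
  set w := S.min' hne
  have hw : w ∈ S := min'_mem S hne
  simp only [hS_def, mem_filter, mem_range, mem_Ico] at hw
  have hSI : S ⊆ Icc w (w + Nat.sqrt L) := fun s hs => by
    have hws : w ≤ s := min'_le S s hs
    simp only [hS_def, mem_filter, mem_range, mem_Ico] at hs
    have := sub_sq_add_mul_le (σ₁ := u - w) (σ₂ := u - s) (by omega) hws (by omega)
    have : s - w ≤ Nat.sqrt L := Nat.le_sqrt'.2 (by omega)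
    exact mem_Icc.2 ⟨hws, by omega⟩
  have hSD : ∀ s ∈ S, s % M ∈ R ∩ {w % M, (u - w) % M} := fun s hs => by
    simp only [hS_def, mem_filter, mem_range, mem_Ico] at hs
    simpa [hs.2.2.1] using mod_eq_or_mod_eq_of_add_eq hR hS hw.2.2.1 hw.2.2.2.1 hs.2.2.1
      hs.2.2.2.1 (by omega)
  calc _ ≤ #S := hFS
    _ ≤ #(R ∩ {w % M, (u - w) % M}) * (Nat.sqrt L / M + 1) :=
        card_le_of_subset_Icc_of_mod_mem hSI hSD
    _ ≤ min 2 #R * (Nat.sqrt L / M + 1) := by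
        gcongr
        exact le_min ((card_le_card inter_subset_right).trans card_le_two)
          (card_le_card inter_subset_left)

end SumProducts

theorem eq_and_eq_or_eq_and_eq_of_add_eq_of_sq_add_sq_eq {K : Type*} [CommRing K] [IsDomain K]
    (h2 : (2 : K) ≠ 0) {a b c d : K} (hsum : a + b = c + d)
    (hsq : a ^ 2 + b ^ 2 = c ^ 2 + d ^ 2) : a = c ∧ b = d ∨ a = d ∧ b = c := by
  have hprod : a * b = c * d :=
    mul_left_cancel₀ h2 (by linear_combination (a + b + c + d) * hsum - hsq)
  have hroot : (a - c) * (a - d) = 0 := by linear_combination a * hsum - hprod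
  rcases mul_eq_zero.1 hroot with h | h
  · exact Or.inl ⟨sub_eq_zero.1 h, by linear_combination hsum - h⟩
  · exact Or.inr ⟨sub_eq_zero.1 h, by linear_combination hsum - h⟩

def erdosTuranSet (p : ℕ) : Finset ℕ := (range p).image fun k => 2 * p * k + k ^ 2 % p

section ErdosTuran

variable {p : ℕ}

theorem lt_of_mem_erdosTuranSet (hp : 0 < p) {r : ℕ} (hr : r ∈ erdosTuranSet p) :
    r < 2 * p ^ 2 := by
  obtain ⟨k, hk, rfl⟩ := mem_image.1 hr
  have := Nat.mod_lt (k ^ 2) hp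
  have := mem_range.1 hk
  nlinarith

theorem card_erdosTuranSet (hp : 0 < p) : #(erdosTuranSet p) = p := by
  refine (card_image_of_injective _ (StrictMono.injective (strictMono_nat_of_lt_succ
    fun k => ?_))).trans (card_range p)
  have := Nat.mod_lt (k ^ 2) hp
  nlinarith [Nat.zero_le ((k + 1) ^ 2 % p)]

theorem isSidon_erdosTuranSet (hp : p.Prime) (hp2 : p ≠ 2) : IsSidon (erdosTuranSet p) := by
  have := Fact.mk hp
  simp only [IsSidon, erdosTuranSet, mem_image, mem_range]
  rintro _ ⟨k₁, hk₁, rfl⟩ _ ⟨k₂, hk₂, rfl⟩ _ ⟨k₃, hk₃, rfl⟩ _ ⟨k₄, hk₄, rfl⟩ h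
  have hsum : k₁ + k₂ = k₃ + k₄ := by
    have hdiv : ∀ a b, (2 * p * a + a ^ 2 % p + (2 * p * b + b ^ 2 % p)) / (2 * p) = a + b :=
      fun a b => by
        have := Nat.mod_lt (a ^ 2) hp.pos
        have := Nat.mod_lt (b ^ 2) hp.pos
        rw [show 2 * p * a + a ^ 2 % p + (2 * p * b + b ^ 2 % p) =
            2 * p * (a + b) + (a ^ 2 % p + b ^ 2 % p) by ring,
          Nat.mul_add_div (Nat.mul_pos two_pos hp.pos), Nat.div_eq_of_lt (by omega), add_zero]
    rw [← hdiv k₁ k₂, h, hdiv]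
  have hcast : ∀ {a b : ℕ}, a < p → b < p → (a : ZMod p) = b → a = b := fun ha hb h => by
    rwa [ZMod.natCast_eq_natCast_iff', Nat.mod_eq_of_lt ha, Nat.mod_eq_of_lt hb] at h
  have hz := congrArg (Nat.cast : ℕ → ZMod p) h
  push_cast [ZMod.natCast_mod, ZMod.natCast_self] at hz
  have hzsum : (k₁ : ZMod p) + k₂ = k₃ + k₄ := by exact_mod_cast congrArg Nat.cast hsum
  rcases eq_and_eq_or_eq_and_eq_of_add_eq_of_sq_add_sq_eq
    (Ring.two_ne_zero ((ZMod.ringChar_zmod_n p).substr hp2)) hzsum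
    (by linear_combination hz) with ⟨h₁, h₂⟩ | ⟨h₁, h₂⟩
  · rw [hcast hk₁ hk₃ h₁, hcast hk₂ hk₄ h₂]; simp
  · rw [hcast hk₁ hk₄ h₁, hcast hk₂ hk₃ h₂]; simp

end ErdosTuran

def blockStart (M L : ℕ) : ℕ → ℕ
  | 0 => M ^ 2 + L
  | k + 1 => (blockStart M L k + (k + 1) * M) ^ 2 + L

def blockSet (M L : ℕ) (R : Finset ℕ) : Set ℕ :=
  {n | ∃ k s, s % M ∈ R ∧ s < (k + 1) * M ∧ n = blockStart M L k + s}

namespace blockStart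

variable {M L : ℕ}

local notation "x" => blockStart M L

theorem succ_eq (k : ℕ) : x (k + 1) = (x k + (k + 1) * M) ^ 2 + L := rfl

theorem sq_add_le (k : ℕ) : ((k + 1) * M) ^ 2 + L ≤ x k := by
  induction k with
  | zero => simp [blockStart]
  | succ k ih =>
    rw [succ_eq]
    have := Nat.le_self_pow two_ne_zero ((k + 1) * M)
    have := Nat.le_mul_of_pos_left M k.succ_pos
    gcongr
    linarith

theorem mul_le (k : ℕ) : (k + 1) * M ≤ x k :=
  (Nat.le_self_pow two_ne_zero _).trans (le_of_add_le_left (sq_add_le k))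

theorem pos (hM : 0 < M) (k : ℕ) : 0 < x k :=
  lt_of_lt_of_le (by positivity) (mul_le k)

theorem add_mul_le_succ (k : ℕ) : x k + (k + 1) * M ≤ x (k + 1) := by
  rw [succ_eq]
  nlinarith

theorem monotone_add_mul : Monotone fun k => x k + (k + 1) * M :=
  monotone_nat_of_le_succ fun k => by have := add_mul_le_succ (M := M) (L := L) k; nlinarith

theorem monotone : Monotone x :=
  monotone_nat_of_le_succ fun k => by have := add_mul_le_succ (M := M) (L := L) k; omega

theorem mul_add_le_of_lt {j k : ℕ} (h : j < k) :
    (k + 1) * M * (x j + (j + 1) * M) + L ≤ x k := by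
  obtain ⟨m, rfl⟩ := Nat.exists_eq_add_of_lt h
  have hM : M ≤ x (j + m) := le_trans (by nlinarith) (mul_le (j + m))
  have hP : x j + (j + 1) * M ≤ x (j + m) + (j + m + 1) * M := monotone_add_mul (by omega)
  rw [succ_eq, sq]
  gcongr
  nlinarith

variable {j k j' k' s σ s' σ' : ℕ}

theorem mul_add_le_of_toLex_lt (hM : 0 < M) (hjk : j ≤ k) (hs : s < (j + 1) * M)
    (hσ : σ < (k + 1) * M) (hj'k' : j' ≤ k') (h : toLex (k, j) < toLex (k', j')) :
    (x j + s) * (x k + σ) + L ≤ (x j' + s') * (x k' + σ') := by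
  have hPj := monotone_add_mul (M := M) (L := L) hjk
  have h1 : 1 ≤ x j := pos hM j
  calc (x j + s) * (x k + σ) + L ≤ (x j + (j + 1) * M) * (x k + (k + 1) * M) + L := by
        gcongr
    _ ≤ x j' * x k' := by
        rcases Prod.Lex.toLex_lt_toLex.1 h with hk | ⟨rfl, hj⟩
        · calc _ ≤ (x k + (k + 1) * M) * (x k + (k + 1) * M) + L := by gcongr
            _ = x (k + 1) := by rw [succ_eq, sq]
            _ ≤ 1 * x k' := by rw [one_mul]; exact monotone hk
            _ ≤ x j' * x k' := by gcongr; exact pos hM j'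
        · have hkj := mul_add_le_of_lt (M := M) (L := L) (lt_of_lt_of_le hj hj'k')
          have hsucc : x j + (j + 1) * M + 1 ≤ x (j + 1) := by
            have : 1 ≤ (j + 1) * M := Nat.mul_pos j.succ_pos hM
            rw [succ_eq]
            nlinarith
          calc _ ≤ (x j + (j + 1) * M + 1) * x k := by nlinarith
            _ ≤ x (j + 1) * x k := by gcongr
            _ ≤ x j' * x k := by gcongr; exact monotone hj
    _ ≤ (x j' + s') * (x k' + σ') := by gcongr <;> omega

theorem mul_add_le_of_lt_left (hjk : j < k) (hs : s < (j + 1) * M) (hσ : σ < (k + 1) * M)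
    (hss' : s < s') : (x j + s) * (x k + σ) + L ≤ (x j + s') * (x k + σ') := by
  have hkj := mul_add_le_of_lt (M := M) (L := L) hjk
  have : (x j + s) * σ ≤ (k + 1) * M * (x j + (j + 1) * M) := by
    rw [mul_comm]; gcongr
  calc (x j + s) * (x k + σ) + L ≤ (x j + s + 1) * x k := by nlinarith
    _ ≤ (x j + s') * (x k + σ') := Nat.mul_le_mul (by omega) (Nat.le_add_right _ _)

theorem mul_add_le_of_lt_right (hσσ' : σ < σ') :
    (x j + s) * (x k + σ) + L ≤ (x j + s) * (x k + σ') := by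
  have := le_of_add_le_right (sq_add_le (M := M) (L := L) j)
  calc (x j + s) * (x k + σ) + L ≤ (x j + s) * (x k + σ + 1) := by nlinarith
    _ ≤ (x j + s) * (x k + σ') := Nat.mul_le_mul_left _ (by omega)

theorem mul_add_le_of_add_lt (hs : s < (k + 1) * M) (hσ : σ < (k + 1) * M)
    (h : s + σ < s' + σ') : (x k + s) * (x k + σ) + L ≤ (x k + s') * (x k + σ') := by
  have := sq_add_le (M := M) (L := L) k
  have : s * σ ≤ ((k + 1) * M) ^ 2 := by rw [sq]; gcongr
  have : (s + σ + 1) * x k ≤ (s' + σ') * x k := Nat.mul_le_mul_right _ h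
  nlinarith

theorem eq_of_lt_add_of_lt_add (hM : 0 < M) (hjk : j ≤ k) (hs : s < (j + 1) * M)
    (hσ : σ < (k + 1) * M) (hj'k' : j' ≤ k') (hs' : s' < (j' + 1) * M)
    (hσ' : σ' < (k' + 1) * M) (h₁ : (x j' + s') * (x k' + σ') < (x j + s) * (x k + σ) + L)
    (h₂ : (x j + s) * (x k + σ) < (x j' + s') * (x k' + σ') + L) :
    j' = j ∧ k' = k ∧ s' + σ' = s + σ ∧ (j < k → s' = s) := by
  obtain ⟨rfl, rfl⟩ : k = k' ∧ j = j' := by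
    rcases lt_trichotomy (toLex (k, j)) (toLex (k', j')) with h | h | h
    · have := mul_add_le_of_toLex_lt (L := L) (s' := s') (σ' := σ') hM hjk hs hσ hj'k' h; omega
    · simpa using h
    · have := mul_add_le_of_toLex_lt (L := L) (s' := s) (σ' := σ) hM hj'k' hs' hσ' hjk h; omega
  rcases hjk.lt_or_eq with hjk | rfl
  · obtain rfl : s' = s := by
      rcases lt_trichotomy s s' with h | h | h
      · have := mul_add_le_of_lt_left (L := L) (σ' := σ') hjk hs hσ h; omega
      · exact h.symm
      · have := mul_add_le_of_lt_left (L := L) (σ' := σ) hjk hs' hσ' h; omega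
    obtain rfl : σ' = σ := by
      rcases lt_trichotomy σ σ' with h | h | h
      · have := mul_add_le_of_lt_right (M := M) (L := L) (j := j) (k := k) (s := s') h; omega
      · exact h.symm
      · have := mul_add_le_of_lt_right (M := M) (L := L) (j := j) (k := k) (s := s') h; omega
    exact ⟨rfl, rfl, rfl, fun _ => rfl⟩
  · refine ⟨rfl, rfl, ?_, fun h => absurd h (lt_irrefl j)⟩
    rcases lt_trichotomy (s + σ) (s' + σ') with h | h | h
    · have := mul_add_le_of_add_lt (L := L) hs hσ h; omega
    · exact h.symm
    · have := mul_add_le_of_add_lt (L := L) hs' hσ' h; omega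

end blockStart

section BlockSet

variable {M L t : ℕ} {R : Finset ℕ}

local notation "x" => blockStart M L

theorem exists_eq_mul_of_mem_mul_blockSet {m : ℕ} (hm : m ∈ blockSet M L R * blockSet M L R) :
    ∃ j k s σ, j ≤ k ∧ s % M ∈ R ∧ σ % M ∈ R ∧ s < (j + 1) * M ∧ σ < (k + 1) * M ∧
      m = (x j + s) * (x k + σ) := by
  obtain ⟨_, ⟨j, s, hsR, hs, rfl⟩, _, ⟨k, σ, hσR, hσ, rfl⟩, rfl⟩ := Set.mem_mul.1 hm
  rcases le_total j k with h | h
  · exact ⟨j, k, s, σ, h, hsR, hσR, hs, hσ, rfl⟩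
  · exact ⟨k, j, σ, s, h, hσR, hsR, hσ, hs, mul_comm _ _⟩

open Classical in
theorem card_filter_mem_mul_blockSet_le (hM : 0 < M) (ht : 0 < t)
    (hcount : ∀ u c₀, #{c ∈ Ico c₀ (c₀ + L) | c ∈ productsWithSum M R u} ≤ t) (a : ℕ) :
    #{m ∈ Ico a (a + L) | m ∈ blockSet M L R * blockSet M L R} ≤ t := by
  set W := {m ∈ Ico a (a + L) | m ∈ blockSet M L R * blockSet M L R}
  rcases W.eq_empty_or_nonempty with hempty | ⟨m₀, hm₀⟩
  · simp [hempty]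
  have hrep : ∀ m ∈ W, _ := fun m hm => exists_eq_mul_of_mem_mul_blockSet (mem_filter.1 hm).2
  obtain ⟨j, k, s₀, σ₀, hjk, -, -, hs₀, hσ₀, rfl⟩ := hrep _ hm₀
  have hW : ∀ m ∈ W, ∃ s σ, s % M ∈ R ∧ σ % M ∈ R ∧ s + σ = s₀ + σ₀ ∧
      (j < k → s = s₀) ∧ m = (x j + s) * (x k + σ) := fun m hm => by
    obtain ⟨j', k', s, σ, hj'k', hsR, hσR, hs, hσ, rfl⟩ := hrep _ hm
    have := mem_Ico.1 (mem_filter.1 hm).1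
    have := mem_Ico.1 (mem_filter.1 hm₀).1
    obtain ⟨rfl, rfl, hsum, hcross⟩ := blockStart.eq_of_lt_add_of_lt_add (L := L)
      hM hjk hs₀ hσ₀ hj'k' hs hσ (by omega) (by omega)
    exact ⟨s, σ, hsR, hσR, hsum, hcross, rfl⟩
  rcases hjk.lt_or_eq with hjk | rfl
  · refine (card_le_one.2 fun m₁ h₁ m₂ h₂ => ?_).trans ht
    obtain ⟨s₁, σ₁, -, -, hsum₁, hs₁, rfl⟩ := hW m₁ h₁
    obtain ⟨s₂, σ₂, -, -, hsum₂, hs₂, rfl⟩ := hW m₂ h₂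
    obtain rfl := hs₁ hjk
    obtain rfl := hs₂ hjk
    obtain rfl : σ₁ = σ₂ := by omega
    rfl
  · set base := x j * x j + (s₀ + σ₀) * x j
    calc #W ≤ #(({c ∈ Ico (a - base) (a - base + L) |
          c ∈ productsWithSum M R (s₀ + σ₀)}).image (· + base)) := card_le_card fun m hm => by
          obtain ⟨s, σ, hsR, hσR, hsum, -, hm'⟩ := hW m hm
          have hbase : m = s * σ + base := by simp only [base, hm', ← hsum]; ring
          have := mem_Ico.1 (mem_filter.1 hm).1
          exact mem_image.2 ⟨s * σ, mem_filter.2 ⟨mem_Ico.2 (by omega),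
            s, σ, hsR, hσR, hsum, rfl⟩, hbase.symm⟩
      _ ≤ t := card_image_le.trans (hcount _ _)

end BlockSet

theorem natCard_inter_Ioc_le (A : Set ℕ) (x K : ℕ) :
    Nat.card ↑(A ∩ Set.Ioc x (x + K)) ≤ K := by
  calc Nat.card ↑(A ∩ Set.Ioc x (x + K)) ≤ Nat.card ↑(Set.Ioc x (x + K)) :=
        Nat.card_mono (Set.finite_Ioc _ _) Set.inter_subset_right
    _ = K := by simp

theorem le_upperBanachDensity_of_frequently {A : Set ℕ} {δ : ℝ}
    (h : ∃ᶠ K in atTop, ∃ x, δ * K ≤ Nat.card ↑(A ∩ Set.Ioc x (x + K))) :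
    δ ≤ upperBanachDensity A := by
  have hle : ∀ K x : ℕ, (Nat.card ↑(A ∩ Set.Ioc x (x + K)) : ℝ) / K ≤ 1 := fun K x =>
    div_le_one_of_le₀ (by exact_mod_cast natCard_inter_Ioc_le A x K) K.cast_nonneg
  refine le_limsup_of_frequently_le ?_ (isBoundedUnder_of ⟨1, fun K => ciSup_le (hle K)⟩)
  refine (h.and_eventually (eventually_gt_atTop 0)).mono fun K ⟨⟨x, hx⟩, hK⟩ => ?_
  exact ((le_div_iff₀ (by exact_mod_cast hK)).2 hx).trans <|
    le_ciSup (f := fun y => (Nat.card ↑(A ∩ Set.Ioc y (y + K)) : ℝ) / K)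
      ⟨1, Set.forall_mem_range.2 (hle K)⟩ x

theorem card_filter_mod_mem_range_mul {M : ℕ} {R : Finset ℕ} (hM : 0 < M)
    (hR : ∀ r ∈ R, r < M) (n : ℕ) : #{s ∈ range (n * M) | s % M ∈ R} = n * #R := by
  rw [card_eq_sum_card_fiberwise (s := {s ∈ range (n * M) | s % M ∈ R}) (t := R) (f := (· % M))
    fun s hs => (mem_filter.1 hs).2, sum_const_nat fun r hrR => ?_, mul_comm]
  have hr : r % M = r := Nat.mod_eq_of_lt (hR r hrR)
  rw [filter_filter, filter_congr fun s _ => show s % M ∈ R ∧ s % M = r ↔ s ≡ r [MOD M] by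
    rw [Nat.ModEq, hr]; exact ⟨And.right, fun h => ⟨h ▸ hrR, h⟩⟩,
    ← Nat.count_eq_card_filter_range, Nat.count_modEq_card _ hM]
  simp [hM]

theorem le_upperBanachDensity_blockSet {M L : ℕ} {R : Finset ℕ} (hM : 0 < M)
    (hR : ∀ r ∈ R, r < M) : (#R : ℝ) / M ≤ upperBanachDensity (blockSet M L R) := by
  refine le_upperBanachDensity_of_frequently (frequently_atTop.2 fun N => ⟨(N + 1) * M,
    Nat.le_mul_of_pos_right _ hM |>.trans' N.le_succ, blockStart M L N - 1, ?_⟩)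
  have hpos := blockStart.pos (L := L) hM N
  have hsub : ↑(({s ∈ range ((N + 1) * M) | s % M ∈ R}).image (blockStart M L N + ·)) ⊆
      blockSet M L R ∩ Set.Ioc (blockStart M L N - 1) (blockStart M L N - 1 + (N + 1) * M) := by
    intro n hn
    obtain ⟨s, hs, rfl⟩ := mem_image.1 hn
    obtain ⟨hs, hsR⟩ := mem_filter.1 hs
    have := mem_range.1 hs
    exact ⟨⟨N, s, hsR, this, rfl⟩, by simp only [Set.mem_Ioc]; omega⟩
  calc (#R : ℝ) / M * ((N + 1) * M : ℕ) = ((N + 1) * #R : ℕ) := by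
        push_cast; field_simp
    _ ≤ _ := by
      rw [← card_filter_mod_mem_range_mul hM hR,
        ← card_image_of_injective _ (add_right_injective _), ← Nat.card_eq_finsetCard]
      exact_mod_cast Nat.card_mono ((Set.finite_Ioc _ _).inter_of_right _) hsub

theorem add_le_of_card_filter_Ico_le {B : Set ℕ} [DecidablePred (· ∈ B)] {L t : ℕ}
    (h : ∀ a, #{m ∈ Ico a (a + L) | m ∈ B} ≤ t) {b : ℕ → ℕ} (hb : StrictMono b)
    (hbB : ∀ n, b n ∈ B) (n : ℕ) : b n + L ≤ b (n + t) := by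
  by_contra! hlt
  have hsub : (Icc n (n + t)).image b ⊆ {m ∈ Ico (b n) (b n + L) | m ∈ B} := fun m hm => by
    obtain ⟨i, hi, rfl⟩ := mem_image.1 hm
    obtain ⟨hni, hit⟩ := mem_Icc.1 hi
    have := hb.monotone hni
    have := hb.monotone hit
    exact mem_filter.2 ⟨mem_Ico.2 ⟨by omega, by omega⟩, hbB i⟩
  have := (card_le_card hsub).trans (h (b n))
  rw [card_image_of_injective _ hb.injective, Nat.card_Icc] at this
  omega

theorem exists_dense_of_isSidon {M L t : ℕ} {R : Finset ℕ} (hM : 0 < M) (ht : 0 < t)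
    (hR : ∀ r ∈ R, 2 * r < M) (hS : IsSidon R) (hLt : min 2 #R * (Nat.sqrt L / M + 1) ≤ t) :
    ∃ A : Set ℕ, 0 ∉ A ∧ (#R : ℝ) / M ≤ upperBanachDensity A ∧
      ∀ b : ℕ → ℕ, StrictMono b → (∀ n, b n ∈ A * A) → ∀ n, b n + L ≤ b (n + t) := by
  classical
  refine ⟨blockSet M L R,
    fun ⟨k, s, _, _, h⟩ => (blockStart.pos (L := L) hM k).ne' (by omega),
    le_upperBanachDensity_blockSet hM fun r hr => by linarith [hR r hr],
    fun b hb hbA => add_le_of_card_filter_Ico_le ?_ hb hbA⟩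
  exact card_filter_mem_mul_blockSet_le hM ht fun u c₀ =>
    (card_productsWithSum_le hR hS u c₀ L).trans hLt

theorem isSidon_singleton (a : ℕ) : IsSidon {a} := by
  simp [IsSidon]

theorem exists_erdosTuranSet_params {α : ℝ} {t L : ℕ} (hα0 : 0 < α) (hα : α ≤ 1 / 32)
    (ht : 2 ≤ t) (hL : (L : ℝ) < t ^ 2 / (2 ^ 22 * α ^ 4) + 1) :
    ∃ (M : ℕ) (R : Finset ℕ), 0 < M ∧ (∀ r ∈ R, 2 * r < M) ∧ IsSidon R ∧
      α < (#R : ℝ) / M ∧ min 2 #R * (Nat.sqrt L / M + 1) ≤ t := by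
  set T := (t : ℝ) ^ 2 / (2 ^ 22 * α ^ 4)
  have hn₀ : 2 ≤ ⌊α⁻¹ / 16⌋₊ := Nat.le_floor <| by
    rw [le_div_iff₀ (by norm_num), le_inv_comm₀ (by norm_num) hα0]
    norm_num; linarith
  obtain ⟨p, hp, hn₀p, hpn₀⟩ :=
    Nat.exists_prime_lt_and_le_two_mul _ (by omega : ⌊α⁻¹ / 16⌋₊ ≠ 0)
  have hplo : 1 / 16 < p * α := by
    have h := (Nat.lt_floor_add_one (α⁻¹ / 16)).trans_le
      (by exact_mod_cast Nat.succ_le_of_lt hn₀p : (⌊α⁻¹ / 16⌋₊ : ℝ) + 1 ≤ p)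
    rw [div_lt_iff₀ (by norm_num), inv_lt_iff_one_lt_mul₀ hα0] at h
    linarith
  have hphi : p * α ≤ 1 / 8 := by
    have h := (Nat.floor_le (by positivity : 0 ≤ α⁻¹ / 16))
    have : (p : ℝ) ≤ 2 * ⌊α⁻¹ / 16⌋₊ := by exact_mod_cast hpn₀
    calc (p : ℝ) * α ≤ 2 * (α⁻¹ / 16) * α := by gcongr; linarith
      _ = 1 / 8 := by field_simp; norm_num
  have hp0 : (0 : ℝ) < p := by exact_mod_cast hp.pos
  have hM : 0 < 4 * p ^ 2 := Nat.mul_pos four_pos (pow_pos hp.pos 2)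
  refine ⟨4 * p ^ 2, erdosTuranSet p, hM, fun r hr => by
    linarith [lt_of_mem_erdosTuranSet hp.pos hr], isSidon_erdosTuranSet hp (by omega), ?_, ?_⟩
  · rw [card_erdosTuranSet hp.pos, lt_div_iff₀ (by exact_mod_cast hM)]
    push_cast
    nlinarith
  have hD : (0 : ℝ) < 2 ^ 22 * α ^ 4 := by positivity
  have hT1 : 1 ≤ T := by
    rw [le_div_iff₀ hD, one_mul]
    have : (2 : ℝ) ≤ t := by exact_mod_cast ht
    have := pow_le_pow_left₀ hα0.le hα 4
    nlinarith
  have hT2 : 2 * T ≤ t ^ 2 * p ^ 4 := by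
    rw [mul_div_assoc', div_le_iff₀ hD]
    have := pow_lt_pow_left₀ hplo (by norm_num) four_ne_zero
    have : (2 : ℝ) ≤ p ^ 4 * (2 ^ 22 * α ^ 4) := by
      rw [mul_left_comm, ← mul_pow]
      nlinarith
    nlinarith [sq_nonneg (t : ℝ)]
  have hq : (t : ℝ) ≤ 4 * (t / 2 : ℕ) := by exact_mod_cast (by omega : t ≤ 4 * (t / 2))
  have hLq : L < (t / 2 * (4 * p ^ 2)) ^ 2 := by
    have : (t : ℝ) ^ 2 * p ^ 4 ≤ ((t / 2 : ℕ) * (4 * p ^ 2)) ^ 2 := by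
      rw [show ((t / 2 : ℕ) * (4 * (p : ℝ) ^ 2)) ^ 2 = (4 * (t / 2 : ℕ)) ^ 2 * p ^ 4 by ring]
      gcongr
    exact_mod_cast (by linarith : (L : ℝ) < ((t / 2 : ℕ) * (4 * p ^ 2)) ^ 2)
  calc min 2 #(erdosTuranSet p) * (Nat.sqrt L / (4 * p ^ 2) + 1) ≤ 2 * (t / 2) := by
        gcongr
        · exact min_le_left _ _
        · exact Nat.div_lt_iff_lt_mul hM |>.2 (Nat.sqrt_lt'.2 hLq)
    _ ≤ t := Nat.mul_div_le t 2

theorem exists_sidon_params {α : ℝ} {t L : ℕ} (hα0 : 0 < α) (hα1 : α < 1) (ht : 2 ≤ t)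
    (hL : (L : ℝ) < t ^ 2 / (2 ^ 22 * α ^ 4) + 1) :
    ∃ (M : ℕ) (R : Finset ℕ), 0 < M ∧ (∀ r ∈ R, 2 * r < M) ∧ IsSidon R ∧
      α < (#R : ℝ) / M ∧ min 2 #R * (Nat.sqrt L / M + 1) ≤ t := by
  rcases le_or_gt α (1 / 32) with hα | hα
  · exact exists_erdosTuranSet_params hα0 hα ht hL
  refine ⟨1, {0}, one_pos, by simp, isSidon_singleton 0, by simpa using hα1, ?_⟩
  have h4 : (4 : ℝ) < 2 ^ 22 * α ^ 4 := by
    have := pow_lt_pow_left₀ hα (by norm_num) four_ne_zero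
    linarith
  have ht' : (4 : ℝ) ≤ t ^ 2 := by
    have : (2 : ℝ) ≤ t := by exact_mod_cast ht
    nlinarith
  have : (t : ℝ) ^ 2 / (2 ^ 22 * α ^ 4) ≤ t ^ 2 / 4 :=
    div_le_div_of_nonneg_left (by positivity) (by norm_num) h4.le
  have hLt : L < t ^ 2 := by exact_mod_cast (by linarith : (L : ℝ) < t ^ 2)
  simpa [Nat.add_one_le_iff] using Nat.sqrt_lt'.2 hLt

/-- For every `0 < α < 1` and `t ≥ 2` there is a set `A` with `d*(A) > α` such that
the increasing enumeration `b` of `B = A·A` satisfies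
`b (n+t) - b n ≥ 2⁻²² t² α⁻⁴` for every `n`. -/
theorem stmt4 (α : ℝ) (hα0 : 0 < α) (hα1 : α < 1) (t : ℕ) (ht : 2 ≤ t) :
    ∃ A : Set ℕ, 0 ∉ A ∧ α < upperBanachDensity A ∧
      ∀ b : ℕ → ℕ, StrictMono b →
        (∀ m, m ∈ Set.range b ↔ ∃ a ∈ A, ∃ a' ∈ A, m = a * a') →
        ∀ n : ℕ, (t : ℝ) ^ 2 / (2 ^ 22 * α ^ 4) ≤ (b (n + t) : ℝ) - b n := by
  set T := (t : ℝ) ^ 2 / (2 ^ 22 * α ^ 4)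
  obtain ⟨M, R, hM, hR, hS, hαR, hLt⟩ :=
    exists_sidon_params (L := ⌈T⌉₊) hα0 hα1 ht (Nat.ceil_lt_add_one (by positivity))
  obtain ⟨A, h0, hA, hgap⟩ := exists_dense_of_isSidon hM (by omega) hR hS hLt
  refine ⟨A, h0, hαR.trans_le hA, fun b hb hbA n => ?_⟩
  have hmem : ∀ n, b n ∈ A * A := fun n => by
    obtain ⟨a, ha, a', ha', h⟩ := (hbA (b n)).1 ⟨n, rfl⟩
    exact Set.mem_mul.2 ⟨a, ha, a', ha', h.symm⟩
  calc T ≤ ⌈T⌉₊ := Nat.le_ceil T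
    _ ≤ (b (n + t) : ℝ) - b n := by
      rw [le_sub_iff_add_le']; exact_mod_cast hgap b hb hmem n
end

section
/- Let a, a', a'', a''' be integers with 0 < a' < a, 0 < a''' < a'', all lying in an interval of length L², such that a - a' = a'' - a''' and a·a''' ≠ a'·a''. Then 0 < |a·a''' - a'·a''| ≤ (L-1)(L²-1). -/
/-! Since `a - a' = a'' - a'''`, the quantity `a·a''' - a'·a''` factors as
`(a - a')(a''' - a')`: the first factor is less than `L` and the second is a
difference of two points of the interval, so less than `L²` in absolute value. -/

open Set

theorem abs_sub_le_of_mem_Icc {α : Type*} [AddCommGroup α] [LinearOrder α]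
    [IsOrderedAddMonoid α] {u v x y : α} (hx : x ∈ Icc u v) (hy : y ∈ Icc u v) :
    |x - y| ≤ v - u :=
  abs_sub_le_iff.2 ⟨sub_le_sub hx.2 hy.1, sub_le_sub hy.2 hx.1⟩

theorem mul_sub_mul_eq_of_sub_eq_sub {R : Type*} [CommRing R] {a b c d : R}
    (h : a - b = c - d) : a * d - b * c = (a - b) * (d - b) := by
  linear_combination b * h

theorem stmt9_general (L : ℕ) (a a' a'' a''' : ℤ)
    (h2 : a' < a)
    (hI : ∃ u : ℤ, a ∈ Set.Icc u (u + L ^ 2 - 1) ∧ a' ∈ Set.Icc u (u + L ^ 2 - 1) ∧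
      a'' ∈ Set.Icc u (u + L ^ 2 - 1) ∧ a''' ∈ Set.Icc u (u + L ^ 2 - 1))
    (hdiff : a - a' = a'' - a''') (hlt : a - a' < L)
    (hne : a * a''' ≠ a' * a'') :
    0 < |a * a''' - a' * a''| ∧ |a * a''' - a' * a''| ≤ ((L : ℤ) - 1) * ((L : ℤ) ^ 2 - 1) := by
  obtain ⟨u, -, ha', -, ha'''⟩ := hI
  have hgap : |a - a'| ≤ (L : ℤ) - 1 := by
    rw [abs_of_pos (sub_pos.2 h2)]
    omega
  have hspread : |a''' - a'| ≤ (L : ℤ) ^ 2 - 1 := by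
    calc |a''' - a'| ≤ u + L ^ 2 - 1 - u := abs_sub_le_of_mem_Icc ha''' ha'
      _ = (L : ℤ) ^ 2 - 1 := by ring
  refine ⟨abs_pos.2 (sub_ne_zero.2 hne), ?_⟩
  rw [mul_sub_mul_eq_of_sub_eq_sub hdiff, abs_mul]
  exact mul_le_mul hgap hspread (abs_nonneg _) ((abs_nonneg _).trans hgap)

/-- If `0 < a' < a`, `0 < a''' < a''` all lie in an interval of `L²` consecutive
integers, `a - a' = a'' - a''' < L` and `a·a''' ≠ a'·a''`, then
`0 < |a·a''' - a'·a''| ≤ (L-1)(L²-1)`. -/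
theorem stmt9 (L : ℕ) (hL : 0 < L) (a a' a'' a''' : ℤ)
    (h1 : 0 < a') (h2 : a' < a) (h3 : 0 < a''') (h4 : a''' < a'')
    (hI : ∃ u : ℤ, a ∈ Set.Icc u (u + L ^ 2 - 1) ∧ a' ∈ Set.Icc u (u + L ^ 2 - 1) ∧
      a'' ∈ Set.Icc u (u + L ^ 2 - 1) ∧ a''' ∈ Set.Icc u (u + L ^ 2 - 1))
    (hdiff : a - a' = a'' - a''') (hlt : a - a' < L)
    (hne : a * a''' ≠ a' * a'') :
    0 < |a * a''' - a' * a''| ∧ |a * a''' - a' * a''| ≤ ((L : ℤ) - 1) * ((L : ℤ) ^ 2 - 1) :=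
  stmt9_general L a a' a'' a''' h2 hI hdiff hlt hne
end

section
/- Define a sequence of integers x_n by an arbitrary positive integer x_1 and, for n ≥ 2, x_n = x_1 + M_n² + M_n(x_{n-1} + M_{n-1}) + (x_{n-1} + M_{n-1})², where M_n is the largest element of a given finite set A_n of non-negative integers. Let A = ⋃_{n≥1} (x_n + A_n). Then every nonzero difference d = c_1·c_2 - c_3·c_4 with c_1, c_2, c_3, c_4 ∈ A, not all four lying in the same block x_n + A_n, satisfies |d| ≥ x_1. -/
/-!
Let `N` be the largest block index among the four factors, `X = x_N`, `M = M_N` and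
`B = x_{N-1} + M_{N-1}`. Factors from block `N` (high) lie in `[X, X + M]`, all others (low) in
`[x₁, B]` because the tops `x_n + M_n` increase. The recurrence `X = x₁ + M² + MB + B²` makes each
of `X² - (X + M)B`, `X - B²` and `X - MB` at least `x₁`. Hence a product of two high factors
exceeds any product with at most one by `x₁`, and one with a high factor exceeds a product of two
low ones. If each side has exactly one high factor, `c₁u - c₃v = X(u - v) + (c₁ - X)u - (c₃ - X)v`
with `u, v` low and the last two terms in `[0, MB]`; when `u = v` the difference is instead a
nonzero multiple of `u ≥ x₁`.
-/

open Set

/- `high` and `low` in the names below refer to `Icc X (X + M)` and `Icc x₁ B`. -/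
namespace TwoScale

variable {x₁ M B X c₁ c₂ c₃ c₄ : ℤ}

theorem add_mul_le (hX : X = x₁ + M ^ 2 + M * B + B ^ 2) : x₁ + M * B ≤ X := by
  nlinarith [sq_nonneg M, sq_nonneg B]

theorem add_mul_self_le (hX : X = x₁ + M ^ 2 + M * B + B ^ 2) (hM : 0 ≤ M) (hB : 0 ≤ B) :
    x₁ + B * B ≤ X := by
  nlinarith [mul_nonneg hM hB]

theorem add_add_mul_le_mul_self (hX : X = x₁ + M ^ 2 + M * B + B ^ 2) (hx₁ : 0 < x₁)
    (hM : 0 ≤ M) (hB : 0 ≤ B) : x₁ + (X + M) * B ≤ X * X := by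
  have hMB : B + M + 1 ≤ X := by nlinarith [mul_nonneg hM hB]
  nlinarith [add_mul_le hX, mul_le_mul_of_nonneg_left hMB (show 0 ≤ X by linarith)]

theorem le_mul_sub_mul_of_high_high (hX : X = x₁ + M ^ 2 + M * B + B ^ 2) (hx₁ : 0 < x₁)
    (hM : 0 ≤ M) (hc₁ : c₁ ∈ Icc X (X + M)) (hc₂ : c₂ ∈ Icc X (X + M))
    (hc₃ : c₃ ∈ Icc X (X + M) ∪ Icc x₁ B) (hc₄ : c₄ ∈ Icc x₁ B) :
    x₁ ≤ c₁ * c₂ - c₃ * c₄ := by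
  obtain ⟨hc₄l, hc₄u⟩ := hc₄
  have hB : 0 ≤ B := by linarith
  have hBX : B < X := by nlinarith [add_mul_self_le hX hM hB]
  have hc₃' : 0 ≤ c₃ ∧ c₃ ≤ X + M := by
    rcases hc₃ with ⟨h, h'⟩ | ⟨h, h'⟩ <;> constructor <;> linarith
  nlinarith [add_add_mul_le_mul_self hX hx₁ hM hB,
    mul_le_mul hc₁.1 hc₂.1 (by linarith) (by linarith [hc₁.1]),
    mul_le_mul hc₃'.2 hc₄u (by linarith) (by linarith)]

theorem le_mul_sub_mul_of_high_low (hX : X = x₁ + M ^ 2 + M * B + B ^ 2) (hx₁ : 0 < x₁)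
    (hM : 0 ≤ M) (hc₁ : X ≤ c₁) (hc₂ : c₂ ∈ Icc x₁ B)
    (hc₃ : c₃ ∈ Icc x₁ B) (hc₄ : c₄ ∈ Icc x₁ B) :
    x₁ ≤ c₁ * c₂ - c₃ * c₄ := by
  have hB : 0 ≤ B := by linarith [hc₂.1, hc₂.2]
  have hBX := add_mul_self_le hX hM hB
  nlinarith [mul_le_mul hc₁ (show 1 ≤ c₂ by linarith [hc₂.1]) zero_le_one (by nlinarith),
    mul_le_mul hc₃.2 hc₄.2 (by linarith [hc₄.1]) hB]

theorem le_abs_mul_sub_mul_of_high_low_high_low (hX : X = x₁ + M ^ 2 + M * B + B ^ 2)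
    (hx₁ : 0 < x₁) (hM : 0 ≤ M) (hc₁ : c₁ ∈ Icc X (X + M)) (hc₂ : c₂ ∈ Icc x₁ B)
    (hc₃ : c₃ ∈ Icc X (X + M)) (hc₄ : c₄ ∈ Icc x₁ B) (hne : c₁ * c₂ ≠ c₃ * c₄) :
    x₁ ≤ |c₁ * c₂ - c₃ * c₄| := by
  obtain ⟨hc₁l, hc₁u⟩ := hc₁
  obtain ⟨hc₂l, hc₂u⟩ := hc₂
  obtain ⟨hc₃l, hc₃u⟩ := hc₃
  obtain ⟨hc₄l, hc₄u⟩ := hc₄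
  rcases eq_or_ne c₂ c₄ with rfl | h
  · have h13 : 1 ≤ |c₁ - c₃| := Int.one_le_abs (sub_ne_zero.2 fun h => hne (by rw [h]))
    calc x₁ ≤ 1 * c₂ := by linarith
      _ ≤ |c₁ - c₃| * c₂ := by gcongr; linarith
      _ = |c₁ * c₂ - c₃ * c₂| := by rw [← sub_mul, abs_mul, abs_of_nonneg (by linarith : 0 ≤ c₂)]
  · have hB : 0 ≤ B := by linarith
    have hX0 : 0 ≤ X := by nlinarith [add_mul_le hX]
    have hXle : X ≤ |X * (c₂ - c₄)| := by
      rw [abs_mul, abs_of_nonneg hX0]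
      exact le_mul_of_one_le_right hX0 (Int.one_le_abs (sub_ne_zero.2 h))
    have hsmall : |(c₃ - X) * c₄ - (c₁ - X) * c₂| ≤ M * B := by
      have := mul_le_mul (sub_le_iff_le_add'.2 hc₁u) hc₂u (by linarith) hM
      have := mul_le_mul (sub_le_iff_le_add'.2 hc₃u) hc₄u (by linarith) hM
      rw [abs_le]; constructor <;> nlinarith
    calc x₁ ≤ X - M * B := by linarith [add_mul_le hX]
      _ ≤ |X * (c₂ - c₄)| - |(c₃ - X) * c₄ - (c₁ - X) * c₂| := by linarith
      _ ≤ |X * (c₂ - c₄) - ((c₃ - X) * c₄ - (c₁ - X) * c₂)| := abs_sub_abs_le_abs_sub _ _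
      _ = |c₁ * c₂ - c₃ * c₄| := by ring_nf

theorem le_abs_mul_sub_mul_of_high_left (hX : X = x₁ + M ^ 2 + M * B + B ^ 2) (hx₁ : 0 < x₁)
    (hM : 0 ≤ M) (hc₁ : c₁ ∈ Icc X (X + M)) (hc₂ : c₂ ∈ Icc X (X + M) ∪ Icc x₁ B)
    (hc₃ : c₃ ∈ Icc X (X + M) ∪ Icc x₁ B) (hc₄ : c₄ ∈ Icc X (X + M) ∪ Icc x₁ B)
    (hlow : ¬(c₂ ∈ Icc X (X + M) ∧ c₃ ∈ Icc X (X + M) ∧ c₄ ∈ Icc X (X + M)))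
    (hne : c₁ * c₂ ≠ c₃ * c₄) :
    x₁ ≤ |c₁ * c₂ - c₃ * c₄| := by
  rcases hc₂ with hc₂ | hc₂ <;> rcases hc₄ with hc₄ | hc₄
  · rcases hc₃ with hc₃ | hc₃
    · exact absurd ⟨hc₂, hc₃, hc₄⟩ hlow
    · rw [mul_comm c₃]
      exact (le_mul_sub_mul_of_high_high hX hx₁ hM hc₁ hc₂ (.inl hc₄) hc₃).trans (le_abs_self _)
  · exact (le_mul_sub_mul_of_high_high hX hx₁ hM hc₁ hc₂ hc₃ hc₄).trans (le_abs_self _)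
  · rcases hc₃ with hc₃ | hc₃
    · rw [abs_sub_comm]
      exact (le_mul_sub_mul_of_high_high hX hx₁ hM hc₃ hc₄ (.inl hc₁) hc₂).trans (le_abs_self _)
    · rw [mul_comm c₃]
      exact le_abs_mul_sub_mul_of_high_low_high_low hX hx₁ hM hc₁ hc₂ hc₄ hc₃ (by rwa [mul_comm c₄])
  · rcases hc₃ with hc₃ | hc₃
    · exact le_abs_mul_sub_mul_of_high_low_high_low hX hx₁ hM hc₁ hc₂ hc₃ hc₄ hne
    · exact (le_mul_sub_mul_of_high_low hX hx₁ hM hc₁.1 hc₂ hc₃ hc₄).trans (le_abs_self _)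

theorem le_abs_mul_sub_mul (hX : X = x₁ + M ^ 2 + M * B + B ^ 2) (hx₁ : 0 < x₁) (hM : 0 ≤ M)
    (hc₁ : c₁ ∈ Icc X (X + M) ∪ Icc x₁ B) (hc₂ : c₂ ∈ Icc X (X + M) ∪ Icc x₁ B)
    (hc₃ : c₃ ∈ Icc X (X + M) ∪ Icc x₁ B) (hc₄ : c₄ ∈ Icc X (X + M) ∪ Icc x₁ B)
    (hhigh : c₁ ∈ Icc X (X + M) ∨ c₂ ∈ Icc X (X + M) ∨ c₃ ∈ Icc X (X + M) ∨ c₄ ∈ Icc X (X + M))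
    (hlow : ¬(c₁ ∈ Icc X (X + M) ∧ c₂ ∈ Icc X (X + M) ∧ c₃ ∈ Icc X (X + M) ∧
      c₄ ∈ Icc X (X + M)))
    (hne : c₁ * c₂ ≠ c₃ * c₄) :
    x₁ ≤ |c₁ * c₂ - c₃ * c₄| := by
  rcases hhigh with h | h | h | h
  · exact le_abs_mul_sub_mul_of_high_left hX hx₁ hM h hc₂ hc₃ hc₄ (by tauto) hne
  · rw [mul_comm c₁]
    exact le_abs_mul_sub_mul_of_high_left hX hx₁ hM h hc₁ hc₃ hc₄ (by tauto) (by rwa [mul_comm c₂])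
  · rw [abs_sub_comm]
    exact le_abs_mul_sub_mul_of_high_left hX hx₁ hM h hc₄ hc₁ hc₂ (by tauto) hne.symm
  · rw [abs_sub_comm, mul_comm c₃]
    exact le_abs_mul_sub_mul_of_high_left hX hx₁ hM h hc₃ hc₁ hc₂ (by tauto)
      (by rw [mul_comm c₄]; exact hne.symm)

end TwoScale

theorem natCast_add_mem_Icc {x a M : ℕ} (ha : a ≤ M) :
    ((x + a : ℕ) : ℤ) ∈ Icc (x : ℤ) (x + M) :=
  ⟨by simp, by exact_mod_cast Nat.add_le_add_left ha x⟩

def IsBlockSeq (x M : ℕ → ℕ) : Prop :=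
  ∀ n, 2 ≤ n →
    x n = x 1 + M n ^ 2 + M n * (x (n - 1) + M (n - 1)) + (x (n - 1) + M (n - 1)) ^ 2

namespace IsBlockSeq

variable {x M : ℕ → ℕ} {m n : ℕ}

theorem first_le (hx : IsBlockSeq x M) (hn : 1 ≤ n) : x 1 ≤ x n := by
  rcases hn.eq_or_lt with rfl | hn
  · rfl
  · rw [hx n hn]; omega

theorem add_lt_succ (hx : IsBlockSeq x M) (hx₁ : 0 < x 1) (hn : 1 ≤ n) :
    x n + M n < x (n + 1) := by
  rw [hx (n + 1) (by omega), Nat.add_sub_cancel]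
  nlinarith [Nat.le_self_pow two_ne_zero (x n + M n)]

theorem add_le_add (hx : IsBlockSeq x M) (hx₁ : 0 < x 1) (hm : 1 ≤ m) (hmn : m ≤ n) :
    x m + M m ≤ x n + M n := by
  induction n, hmn using Nat.le_induction with
  | base => rfl
  | succ n hmn ih => have := hx.add_lt_succ hx₁ (hm.trans hmn); omega

theorem pred_add_lt (hx : IsBlockSeq x M) (hx₁ : 0 < x 1) (hn : 2 ≤ n) :
    x (n - 1) + M (n - 1) < x n := by
  simpa [Nat.sub_add_cancel (one_le_two.trans hn)] using hx.add_lt_succ hx₁ (n := n - 1) (by omega)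

theorem cast_add_mem_Icc_of_lt (hx : IsBlockSeq x M) (hx₁ : 0 < x 1) {a : ℕ} (hm : 1 ≤ m)
    (hmn : m < n) (ha : a ≤ M m) :
    ((x m + a : ℕ) : ℤ) ∈ Icc (x 1 : ℤ) ((x (n - 1) + M (n - 1) : ℕ) : ℤ) := by
  have := hx.add_le_add hx₁ hm (Nat.le_sub_one_of_lt hmn)
  constructor <;> norm_cast
  · exact (hx.first_le hm).trans (Nat.le_add_right _ _)
  · omega

theorem cast_add_notMem_Icc_of_lt (hx : IsBlockSeq x M) (hx₁ : 0 < x 1) {a : ℕ} (hm : 1 ≤ m)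
    (hmn : m < n) (ha : a ≤ M m) : ((x m + a : ℕ) : ℤ) ∉ Icc (x n : ℤ) (x n + M n) := fun h =>
  ((hx.cast_add_mem_Icc_of_lt hx₁ hm hmn ha).2.trans_lt
    (by exact_mod_cast hx.pred_add_lt hx₁ (by omega))).not_ge h.1

theorem cast_add_mem_Icc_union (hx : IsBlockSeq x M) (hx₁ : 0 < x 1) {a : ℕ} (hm : 1 ≤ m)
    (hmn : m ≤ n) (ha : a ≤ M m) :
    ((x m + a : ℕ) : ℤ) ∈
      Icc (x n : ℤ) (x n + M n) ∪ Icc (x 1 : ℤ) ((x (n - 1) + M (n - 1) : ℕ) : ℤ) := by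
  rcases hmn.eq_or_lt with rfl | hmn
  exacts [.inl (natCast_add_mem_Icc ha), .inr (hx.cast_add_mem_Icc_of_lt hx₁ hm hmn ha)]

end IsBlockSeq

/-- Block construction: with `x n = x 1 + M n ² + M n (x (n-1) + M (n-1)) + (x (n-1) + M (n-1))²`
for `n ≥ 2`, where `M n = max (A n)`, and `𝒜 = ⋃_{n ≥ 1} (x n + A n)`, every nonzero
difference `c₁c₂ - c₃c₄` of products of elements of `𝒜` not all lying in the same
block `x n + A n` has absolute value at least `x 1`. -/
theorem stmt13 (A : ℕ → Finset ℕ) (hA : ∀ n, (A n).Nonempty)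
    (M : ℕ → ℕ) (hM : ∀ n, M n = (A n).max' (hA n))
    (x : ℕ → ℕ) (hx1 : 0 < x 1)
    (hx : ∀ n, 2 ≤ n →
      x n = x 1 + (M n) ^ 2 + M n * (x (n - 1) + M (n - 1)) + (x (n - 1) + M (n - 1)) ^ 2)
    (𝒜 : Set ℕ) (h𝒜 : 𝒜 = {c | ∃ n, 1 ≤ n ∧ ∃ a ∈ A n, c = x n + a})
    (c₁ c₂ c₃ c₄ : ℕ) (h₁ : c₁ ∈ 𝒜) (h₂ : c₂ ∈ 𝒜) (h₃ : c₃ ∈ 𝒜) (h₄ : c₄ ∈ 𝒜)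
    (hnot : ¬ ∃ n, 1 ≤ n ∧ (∃ a ∈ A n, c₁ = x n + a) ∧ (∃ a ∈ A n, c₂ = x n + a) ∧
      (∃ a ∈ A n, c₃ = x n + a) ∧ (∃ a ∈ A n, c₄ = x n + a))
    (hne : c₁ * c₂ ≠ c₃ * c₄) :
    (x 1 : ℤ) ≤ |(c₁ * c₂ : ℤ) - (c₃ * c₄ : ℤ)| := by
  change IsBlockSeq x M at hx
  subst h𝒜
  obtain ⟨n₁, hn₁, a₁, ha₁, rfl⟩ := h₁
  obtain ⟨n₂, hn₂, a₂, ha₂, rfl⟩ := h₂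
  obtain ⟨n₃, hn₃, a₃, ha₃, rfl⟩ := h₃
  obtain ⟨n₄, hn₄, a₄, ha₄, rfl⟩ := h₄
  obtain ⟨N, hN⟩ : ∃ N, N = max (max n₁ n₂) (max n₃ n₄) := ⟨_, rfl⟩
  have hlow : n₁ < N ∨ n₂ < N ∨ n₃ < N ∨ n₄ < N := by
    by_contra! h
    obtain ⟨rfl, rfl, rfl⟩ : n₂ = n₁ ∧ n₃ = n₁ ∧ n₄ = n₁ := by omega
    exact hnot ⟨_, hn₁, ⟨a₁, ha₁, rfl⟩, ⟨a₂, ha₂, rfl⟩, ⟨a₃, ha₃, rfl⟩, ⟨a₄, ha₄, rfl⟩⟩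
  replace ha₁ := hM n₁ ▸ (A n₁).le_max' _ ha₁
  replace ha₂ := hM n₂ ▸ (A n₂).le_max' _ ha₂
  replace ha₃ := hM n₃ ▸ (A n₃).le_max' _ ha₃
  replace ha₄ := hM n₄ ▸ (A n₄).le_max' _ ha₄
  refine TwoScale.le_abs_mul_sub_mul (by exact_mod_cast hx N (by omega)) (by exact_mod_cast hx1)
    (by positivity) (hx.cast_add_mem_Icc_union hx1 hn₁ (by omega) ha₁)
    (hx.cast_add_mem_Icc_union hx1 hn₂ (by omega) ha₂)
    (hx.cast_add_mem_Icc_union hx1 hn₃ (by omega) ha₃)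
    (hx.cast_add_mem_Icc_union hx1 hn₄ (by omega) ha₄) ?_ ?_ (by exact_mod_cast hne)
  · rcases (show N = n₁ ∨ N = n₂ ∨ N = n₃ ∨ N = n₄ by omega) with rfl | rfl | rfl | rfl
    exacts [.inl (natCast_add_mem_Icc ha₁), .inr (.inl (natCast_add_mem_Icc ha₂)),
      .inr (.inr (.inl (natCast_add_mem_Icc ha₃))),
      .inr (.inr (.inr (natCast_add_mem_Icc ha₄)))]
  · rintro ⟨h₁, h₂, h₃, h₄⟩
    rcases hlow with h | h | h | h
    exacts [hx.cast_add_notMem_Icc_of_lt hx1 hn₁ h ha₁ h₁,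
      hx.cast_add_notMem_Icc_of_lt hx1 hn₂ h ha₂ h₂, hx.cast_add_notMem_Icc_of_lt hx1 hn₃ h ha₃ h₃,
      hx.cast_add_notMem_Icc_of_lt hx1 hn₄ h ha₄ h₄]
end

section
/- Let x_n, A_n, A be as in the block construction with A_n = {1, ..., n} and x_1 = t², for an integer t ≥ 7. If c_0·c_0', ..., c_t·c_t' are t+1 distinct elements of A·A with all c_i, c_i' lying in the same block x_n + A_n, then there exist indices i ≠ j with |c_i·c_i' - c_j·c_j'| ≥ t²/36. -/
/-!
Write the block as `X + {1, …, n}` with `X = x n`; the recursion gives `X + 1 ≥ t² + n²`.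
Since `4 (X + a) (X + b) = (2X + a + b)² - (a - b)²`, a product is fixed by the sum `a + b` and
by `|a - b|`. Two factor pairs with different sums give products at least `X + 1 - n² ≥ t²`
apart. If all `t + 1` sums agree, the values `|aᵢ - bᵢ|` are `t + 1` distinct naturals, so two
of them differ by at least `t`, and the corresponding products differ by at least `t² / 4`.
-/

open Function Finset

lemma sq_add_sq_le_add_one_of_block_recursion (t : ℕ) (x : ℕ → ℕ) (hx1 : x 1 = t ^ 2)
    (hx : ∀ n, 2 ≤ n →
      x n = x 1 + n ^ 2 + n * (x (n - 1) + (n - 1)) + (x (n - 1) + (n - 1)) ^ 2)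
    {n : ℕ} (hn : 1 ≤ n) : t ^ 2 + n ^ 2 ≤ x n + 1 := by
  rcases hn.eq_or_lt with rfl | hn
  · simp [hx1]
  · rw [hx n hn, hx1]
    nlinarith

lemma Fin.exists_add_le_of_injective {t : ℕ} {f : Fin (t + 1) → ℕ} (hf : Injective f) :
    ∃ i j, f j + t ≤ f i := by
  obtain ⟨i, hi⟩ := Finite.exists_max f
  obtain ⟨j, hj⟩ := Finite.exists_min f
  refine ⟨i, j, ?_⟩
  have hsub : univ.image f ⊆ Icc (f j) (f i) := by
    simp only [subset_iff, mem_image, mem_univ, true_and, mem_Icc]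
    rintro _ ⟨k, rfl⟩
    exact ⟨hj k, hi k⟩
  have hcard := card_le_card hsub
  rw [card_image_of_injective _ hf, card_univ, Fintype.card_fin, Nat.card_Icc] at hcard
  omega

lemma four_mul_add_mul_add (X a b : ℤ) :
    4 * ((X + a) * (X + b)) = (2 * X + a + b) ^ 2 - (a - b) ^ 2 := by
  ring

lemma sq_le_mul_sub_mul_of_add_lt {t n X a b a' b' : ℤ} (hX : t ^ 2 + n ^ 2 ≤ X + 1)
    (ha : a ∈ Icc 1 n) (hb : b ∈ Icc 1 n) (ha' : a' ∈ Icc 1 n) (hb' : b' ∈ Icc 1 n)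
    (hlt : a' + b' < a + b) : t ^ 2 ≤ (X + a) * (X + b) - (X + a') * (X + b') := by
  simp only [mem_Icc] at ha hb ha' hb'
  have hX0 : 0 ≤ X := by nlinarith
  have hsum : X ≤ (a + b - (a' + b')) * X := le_mul_of_one_le_left hX0 (by omega)
  have hprod : a' * b' ≤ n ^ 2 := by nlinarith
  nlinarith

lemma exists_sq_le_mul_sub_mul_of_add_eq {t : ℕ} (ht : 1 ≤ t) (X s : ℤ)
    {a b : Fin (t + 1) → ℤ} (hs : ∀ i, a i + b i = s)
    (hP : Injective fun i => (X + a i) * (X + b i)) :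
    ∃ i j, i ≠ j ∧ (t : ℤ) ^ 2 ≤ 4 * ((X + a j) * (X + b j) - (X + a i) * (X + b i)) := by
  set d : Fin (t + 1) → ℕ := fun i => (a i - b i).natAbs
  have h4P : ∀ i, 4 * ((X + a i) * (X + b i)) = (2 * X + s) ^ 2 - (d i : ℤ) ^ 2 := by
    intro i
    rw [four_mul_add_mul_add, add_assoc, hs, Int.natAbs_sq]
  have hd : Injective d := by
    intro i j hij
    apply hP
    have := congrArg (fun m : ℕ => (2 * X + s) ^ 2 - (m : ℤ) ^ 2) hij
    simp only [← h4P] at this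
    simpa using this
  obtain ⟨i, j, hij⟩ := Fin.exists_add_le_of_injective hd
  refine ⟨i, j, fun h => by subst h; omega, ?_⟩
  have hij' : (d j : ℤ) + t ≤ d i := by exact_mod_cast hij
  rw [mul_sub, h4P, h4P]
  nlinarith [(d j).cast_nonneg (α := ℤ)]

theorem exists_sq_le_four_mul_abs_sub {t : ℕ} (ht : 1 ≤ t) {n X : ℤ}
    (hX : (t : ℤ) ^ 2 + n ^ 2 ≤ X + 1) {a b : Fin (t + 1) → ℤ} (ha : ∀ i, a i ∈ Icc 1 n)
    (hb : ∀ i, b i ∈ Icc 1 n) (hP : Injective fun i => (X + a i) * (X + b i)) :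
    ∃ i j, i ≠ j ∧ (t : ℤ) ^ 2 ≤ 4 * |(X + a i) * (X + b i) - (X + a j) * (X + b j)| := by
  by_cases hs : ∀ i, a i + b i = a 0 + b 0
  · obtain ⟨i, j, hij, h⟩ := exists_sq_le_mul_sub_mul_of_add_eq ht X _ hs hP
    exact ⟨j, i, hij.symm, h.trans (by gcongr; exact le_abs_self _)⟩
  · obtain ⟨i, hi⟩ := not_forall.mp hs
    have key : ∀ k l, a l + b l < a k + b k →
        ∃ i j, i ≠ j ∧ (t : ℤ) ^ 2 ≤ 4 * |(X + a i) * (X + b i) - (X + a j) * (X + b j)| :=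
      fun k l hlt => ⟨k, l, fun h => by subst h; omega, by
        have := sq_le_mul_sub_mul_of_add_lt hX (ha k) (hb k) (ha l) (hb l) hlt
        have := le_abs_self ((X + a k) * (X + b k) - (X + a l) * (X + b l))
        nlinarith⟩
    rcases Ne.lt_or_gt hi with h | h
    · exact key 0 i h
    · exact key i 0 h

theorem stmt16_general (t : ℕ) (ht : 7 ≤ t)
    (x : ℕ → ℕ) (hx1 : x 1 = t ^ 2)
    (hx : ∀ n, 2 ≤ n →
      x n = x 1 + n ^ 2 + n * (x (n - 1) + (n - 1)) + (x (n - 1) + (n - 1)) ^ 2)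
    (n : ℕ) (c c' : Fin (t + 1) → ℕ)
    (hc : ∀ i, ∃ a ∈ Finset.Icc 1 n, c i = x n + a)
    (hc' : ∀ i, ∃ a ∈ Finset.Icc 1 n, c' i = x n + a)
    (hdist : Function.Injective fun i => c i * c' i) :
    ∃ i j, i ≠ j ∧ (t : ℝ) ^ 2 / 36 ≤ |(c i * c' i : ℝ) - (c j * c' j : ℝ)| := by
  choose a ha hca using hc
  choose b hb hcb using hc'
  have hn : 1 ≤ n := (mem_Icc.mp (ha 0)).1.trans (mem_Icc.mp (ha 0)).2
  have hX := sq_add_sq_le_add_one_of_block_recursion t x hx1 hx hn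
  have hprod : ∀ i, ((c i * c' i : ℕ) : ℤ) = (x n + a i : ℤ) * (x n + b i) := by
    intro i
    rw [hca, hcb]
    push_cast
    rfl
  obtain ⟨i, j, hij, h⟩ := exists_sq_le_four_mul_abs_sub (n := n) (X := x n) (by omega)
    (by exact_mod_cast hX) (a := fun i => a i) (b := fun i => b i)
    (fun i => by simpa using ha i) (fun i => by simpa using hb i)
    (fun i j h => hdist (by simpa only [← hprod, Nat.cast_inj] using h))
  refine ⟨i, j, hij, ?_⟩
  rw [← hprod, ← hprod] at h
  have h' : (t : ℝ) ^ 2 ≤ 4 * |(c i * c' i : ℝ) - (c j * c' j : ℝ)| := by exact_mod_cast h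
  nlinarith [sq_nonneg (t : ℝ)]

/-- Block construction with `A n = {1, …, n}` and `x 1 = t²`, `t ≥ 7`: among any
`t + 1` distinct products `cᵢ cᵢ'` with all factors in the same block
`x n + {1, …, n}`, two differ by at least `t²/36`. -/
theorem stmt16 (t : ℕ) (ht : 7 ≤ t)
    (x : ℕ → ℕ) (hx1 : x 1 = t ^ 2)
    (hx : ∀ n, 2 ≤ n →
      x n = x 1 + n ^ 2 + n * (x (n - 1) + (n - 1)) + (x (n - 1) + (n - 1)) ^ 2)
    (n : ℕ) (hn : 1 ≤ n) (c c' : Fin (t + 1) → ℕ)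
    (hc : ∀ i, ∃ a ∈ Finset.Icc 1 n, c i = x n + a)
    (hc' : ∀ i, ∃ a ∈ Finset.Icc 1 n, c' i = x n + a)
    (hdist : Function.Injective fun i => c i * c' i) :
    ∃ i j, i ≠ j ∧ (t : ℝ) ^ 2 / 36 ≤ |(c i * c' i : ℝ) - (c j * c' j : ℝ)| :=
  stmt16_general t ht x hx1 hx n c c' hc hc' hdist
end

section
/- For every 0 < α < 1 and ε > 0, there exists a set A of positive integers with lower asymptotic density greater than α such that the product set B = A·A has upper asymptotic density less than ε. -/
/-
Let ω(n) count the primes of a finite set P that divide n, and μ = ∑_{p ∈ P} 1/p. Then ω is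
periodic modulo Q = ∏ P, and over one period it has mean μ and variance at most μ
(Turán–Kubilius), so by Chebyshev ω(n) ≥ 3μ/4 outside a proportion 16/μ of the integers;
these integers form A. For a, a' ∈ A either p² ∣ aa' for some p ∈ P, which happens with density
at most ∑ 1/p², or ω(aa') = ω(a) + ω(a') ≥ 3μ/2, which by Chebyshev again happens with density
at most 4/μ. Choosing K large, then y large, then P among the primes above y with
K ≤ μ ≤ K + 1 makes ∑ 1/p² ≤ μ/y and 4/μ both small.
-/

/-- The lower asymptotic density of a set of natural numbers. -/
noncomputable def lowerDensity (A : Set ℕ) : ℝ :=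
  Filter.liminf (fun N : ℕ => (Nat.card (A ∩ Set.Icc 1 N : Set ℕ) : ℝ) / N) Filter.atTop

/-- The upper asymptotic density of a set of natural numbers. -/
noncomputable def upperDensity (A : Set ℕ) : ℝ :=
  Filter.limsup (fun N : ℕ => (Nat.card (A ∩ Set.Icc 1 N : Set ℕ) : ℝ) / N) Filter.atTop

open Filter Finset Function

section Density

noncomputable def partialDensity (A : Set ℕ) (N : ℕ) : ℝ :=
  (Nat.card (A ∩ Set.Icc 1 N : Set ℕ) : ℝ) / N

lemma lowerDensity_eq_liminf (A : Set ℕ) :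
    lowerDensity A = liminf (partialDensity A) atTop := rfl

lemma upperDensity_eq_limsup (A : Set ℕ) :
    upperDensity A = limsup (partialDensity A) atTop := rfl

lemma card_inter_Icc_le (A : Set ℕ) (N : ℕ) : Nat.card (A ∩ Set.Icc 1 N : Set ℕ) ≤ N :=
  (Nat.card_mono (Set.finite_Icc 1 N) Set.inter_subset_right).trans (by simp)

lemma card_inter_Icc_mono {A B : Set ℕ} (h : ∀ n, 0 < n → n ∈ A → n ∈ B) (N : ℕ) :
    Nat.card (A ∩ Set.Icc 1 N : Set ℕ) ≤ Nat.card (B ∩ Set.Icc 1 N : Set ℕ) :=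
  Nat.card_mono ((Set.finite_Icc 1 N).inter_of_right B) fun n ⟨hA, hn⟩ => ⟨h n hn.1 hA, hn⟩

lemma card_union_inter_Icc_le (A B : Set ℕ) (N : ℕ) :
    Nat.card ((A ∪ B) ∩ Set.Icc 1 N : Set ℕ)
      ≤ Nat.card (A ∩ Set.Icc 1 N : Set ℕ) + Nat.card (B ∩ Set.Icc 1 N : Set ℕ) := by
  simp only [Set.union_inter_distrib_right, Nat.card_coe_set_eq]
  exact Set.ncard_union_le _ _

lemma partialDensity_nonneg (A : Set ℕ) (N : ℕ) : 0 ≤ partialDensity A N := by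
  unfold partialDensity; positivity

lemma partialDensity_le_one (A : Set ℕ) (N : ℕ) : partialDensity A N ≤ 1 :=
  div_le_one_of_le₀ (by exact_mod_cast card_inter_Icc_le A N) (Nat.cast_nonneg N)

lemma isBoundedUnder_le_partialDensity (A : Set ℕ) :
    IsBoundedUnder (· ≤ ·) atTop (partialDensity A) :=
  isBoundedUnder_of ⟨1, partialDensity_le_one A⟩

lemma isBoundedUnder_ge_partialDensity (A : Set ℕ) :
    IsBoundedUnder (· ≥ ·) atTop (partialDensity A) :=
  isBoundedUnder_of ⟨0, partialDensity_nonneg A⟩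

lemma lowerDensity_mono {A B : Set ℕ} (h : ∀ n, 0 < n → n ∈ A → n ∈ B) :
    lowerDensity A ≤ lowerDensity B :=
  liminf_le_liminf
    (Eventually.of_forall fun N => by
      gcongr
      exact card_inter_Icc_mono h N)
    (isBoundedUnder_ge_partialDensity A) (isBoundedUnder_le_partialDensity B).isCoboundedUnder_ge

lemma upperDensity_mono {A B : Set ℕ} (h : A ⊆ B) : upperDensity A ≤ upperDensity B :=
  limsup_le_limsup
    (Eventually.of_forall fun N => by
      dsimp only
      gcongr
      exact card_inter_Icc_mono (fun n _ hn => h hn) N)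
    (isBoundedUnder_ge_partialDensity A).isCoboundedUnder_le (isBoundedUnder_le_partialDensity B)

lemma upperDensity_union_le (A B : Set ℕ) :
    upperDensity (A ∪ B) ≤ upperDensity A + upperDensity B := by
  have hA := isBoundedUnder_le_partialDensity A
  have hB := isBoundedUnder_le_partialDensity B
  calc upperDensity (A ∪ B) ≤ limsup (partialDensity A + partialDensity B) atTop :=
        limsup_le_limsup
          (Eventually.of_forall fun N => by
            simp only [Pi.add_apply, partialDensity, ← add_div]
            gcongr
            exact_mod_cast card_union_inter_Icc_le A B N)
          (isBoundedUnder_ge_partialDensity _).isCoboundedUnder_le (isBoundedUnder_le_add hA hB)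
    _ ≤ upperDensity A + upperDensity B :=
        limsup_add_le (isBoundedUnder_ge_partialDensity A) hA
          (isBoundedUnder_ge_partialDensity B).isCoboundedUnder_le hB

lemma le_lowerDensity_of_card_ge {A : Set ℕ} {c C : ℝ}
    (h : ∀ N : ℕ, 0 < N → c * N - C ≤ Nat.card (A ∩ Set.Icc 1 N : Set ℕ)) :
    c ≤ lowerDensity A := by
  have hlim : Tendsto (fun N : ℕ => c - C / N) atTop (nhds c) := by
    simpa using tendsto_const_nhds.sub (tendsto_const_div_atTop_nhds_zero_nat C)
  rw [← hlim.liminf_eq, lowerDensity_eq_liminf]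
  refine liminf_le_liminf (eventually_atTop.2 ⟨1, fun N hN => ?_⟩) hlim.isBoundedUnder_ge
    (isBoundedUnder_le_partialDensity A).isCoboundedUnder_ge
  have hN : (0 : ℝ) < N := by exact_mod_cast hN
  rw [partialDensity, le_div_iff₀ hN, sub_mul, div_mul_cancel₀ _ hN.ne']
  exact h N (by exact_mod_cast hN)

lemma upperDensity_le_of_card_le {A : Set ℕ} {c C : ℝ}
    (h : ∀ N : ℕ, 0 < N → (Nat.card (A ∩ Set.Icc 1 N : Set ℕ) : ℝ) ≤ c * N + C) :
    upperDensity A ≤ c := by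
  have hlim : Tendsto (fun N : ℕ => c + C / N) atTop (nhds c) := by
    simpa using tendsto_const_nhds.add (tendsto_const_div_atTop_nhds_zero_nat C)
  rw [← hlim.limsup_eq, upperDensity_eq_limsup]
  refine limsup_le_limsup (eventually_atTop.2 ⟨1, fun N hN => ?_⟩)
    (isBoundedUnder_ge_partialDensity A).isCoboundedUnder_le hlim.isBoundedUnder_le
  have hN : (0 : ℝ) < N := by exact_mod_cast hN
  rw [partialDensity, div_le_iff₀ hN, add_mul, div_mul_cancel₀ _ hN.ne']
  exact h N (by exact_mod_cast hN)

lemma upperDensity_biUnion_le {ι : Type*} (s : Finset ι) (A : ι → Set ℕ) :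
    upperDensity (⋃ i ∈ s, A i) ≤ ∑ i ∈ s, upperDensity (A i) := by
  classical
  induction s using Finset.induction_on with
  | empty => simpa using upperDensity_le_of_card_le (A := ∅) (c := 0) (C := 0) (by simp)
  | insert i s hi ih =>
    rw [Finset.set_biUnion_insert, sum_insert hi]
    exact (upperDensity_union_le _ _).trans (by gcongr)

end Density

section Periodic

lemma Nat.count_add_count_not (p : ℕ → Prop) [DecidablePred p] (n : ℕ) :
    Nat.count p n + Nat.count (fun k => ¬ p k) n = n := by
  simp only [Nat.count_eq_card_filter_range]
  rw [card_filter_add_card_filter_not, card_range]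

lemma Nat.count_succ_eq_card_inter_Icc_add (p : ℕ → Prop) [DecidablePred p] (N : ℕ) :
    Nat.count p (N + 1) = Nat.card ({n | p n} ∩ Set.Icc 1 N : Set ℕ) + if p 0 then 1 else 0 := by
  have hset : ({n | p n} ∩ Set.Icc 1 N : Set ℕ)
      = (({k ∈ range N | p (k + 1)} : Finset ℕ).map (addRightEmbedding 1) : Set ℕ) := by
    ext n
    cases n <;> simp [and_comm]
  rw [Nat.count_succ', hset, Nat.card_coe_set_eq, Set.ncard_coe_finset, card_map,
    Nat.count_eq_card_filter_range]

variable {p : ℕ → Prop} [DecidablePred p] {Q : ℕ}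

lemma Nat.count_mul_of_periodic (hp : Periodic p Q) (m : ℕ) :
    Nat.count p (m * Q) = m * Nat.count p Q := by
  induction m with
  | zero => simp
  | succ m ih =>
    have hshift : (fun k => p (m * Q + k)) = p := funext fun k => by
      rw [add_comm]; exact propext (hp.nat_mul m k).to_iff
    rw [add_mul, one_mul, Nat.count_add, ih]
    simp only [hshift, add_mul, one_mul]

lemma le_lowerDensity_of_periodic (hQ : 0 < Q) (hp : Periodic p Q) :
    (Nat.count p Q : ℝ) / Q ≤ lowerDensity {n | p n} := by
  have hQ' : (0 : ℝ) < Q := by exact_mod_cast hQ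
  refine le_lowerDensity_of_card_ge (C := Nat.count p Q + 1) fun N _ => ?_
  have hcount : N / Q * Nat.count p Q ≤ Nat.card ({n | p n} ∩ Set.Icc 1 N : Set ℕ) + 1 := by
    rw [← Nat.count_mul_of_periodic hp]
    calc Nat.count p (N / Q * Q) ≤ Nat.count p (N + 1) :=
          Nat.count_monotone p ((Nat.div_mul_le_self N Q).trans N.le_succ)
      _ ≤ _ := by rw [Nat.count_succ_eq_card_inter_Icc_add]; split <;> omega
  have hdiv : (N : ℝ) / Q ≤ (N / Q : ℕ) + 1 := by
    rw [div_le_iff₀ hQ']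
    exact_mod_cast (add_one_mul (N / Q) Q ▸ Nat.lt_div_mul_add hQ).le
  calc (Nat.count p Q : ℝ) / Q * N - (Nat.count p Q + 1)
      = (N : ℝ) / Q * Nat.count p Q - Nat.count p Q - 1 := by ring
    _ ≤ (((N / Q : ℕ) : ℝ) + 1) * Nat.count p Q - Nat.count p Q - 1 := by gcongr
    _ = ((N / Q * Nat.count p Q : ℕ) : ℝ) - 1 := by push_cast; ring
    _ ≤ _ := by rw [sub_le_iff_le_add]; exact_mod_cast hcount

lemma upperDensity_le_of_periodic (hQ : 0 < Q) (hp : Periodic p Q) :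
    upperDensity {n | p n} ≤ (Nat.count p Q : ℝ) / Q := by
  have hQ' : (0 : ℝ) < Q := by exact_mod_cast hQ
  refine upperDensity_le_of_card_le (C := Nat.count p Q) fun N _ => ?_
  have hcount : Nat.card ({n | p n} ∩ Set.Icc 1 N : Set ℕ) ≤ (N / Q + 1) * Nat.count p Q := by
    rw [← Nat.count_mul_of_periodic hp]
    calc Nat.card ({n | p n} ∩ Set.Icc 1 N : Set ℕ) ≤ Nat.count p (N + 1) := by
          rw [Nat.count_succ_eq_card_inter_Icc_add]; omega
      _ ≤ _ := Nat.count_monotone p (by rw [add_mul, one_mul]; exact Nat.lt_div_mul_add hQ)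
  calc (Nat.card ({n | p n} ∩ Set.Icc 1 N : Set ℕ) : ℝ)
      ≤ ((N / Q + 1) * Nat.count p Q : ℕ) := by exact_mod_cast hcount
    _ = (((N / Q : ℕ) : ℝ) + 1) * Nat.count p Q := by push_cast; ring
    _ ≤ ((N : ℝ) / Q + 1) * Nat.count p Q := by gcongr; exact Nat.cast_div_le
    _ = _ := by ring

lemma Nat.count_dvd_of_dvd {d : ℕ} (hd : d ∣ Q) : Nat.count (d ∣ ·) Q = Q / d := by
  rcases Nat.eq_zero_or_pos d with rfl | hd0
  · simp [Nat.eq_zero_of_zero_dvd hd]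
  have hone : Nat.count (d ∣ ·) d = 1 := by
    rw [Nat.count_eq_card_filter_range, card_eq_one]
    refine ⟨0, eq_singleton_iff_unique_mem.2 ⟨by simp [hd0], fun n hn => ?_⟩⟩
    rw [mem_filter, mem_range] at hn
    exact Nat.eq_zero_of_dvd_of_lt hn.2 hn.1
  conv_lhs => rw [← Nat.div_mul_cancel hd]
  rw [Nat.count_mul_of_periodic (fun n => propext Nat.dvd_add_self_right), hone, mul_one]

lemma upperDensity_setOf_dvd_le {d : ℕ} (hd : 0 < d) : upperDensity {n | d ∣ n} ≤ 1 / d := by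
  simpa [Nat.count_dvd_of_dvd (dvd_refl d), Nat.div_self hd] using
    upperDensity_le_of_periodic hd (fun n => propext Nat.dvd_add_self_right)

end Periodic

section DvdCount

def dvdCount (P : Finset ℕ) (n : ℕ) : ℕ := #{p ∈ P | p ∣ n}

noncomputable def recipSum (P : Finset ℕ) : ℝ := ∑ p ∈ P, (p : ℝ)⁻¹

variable {P : Finset ℕ} {Q : ℕ}

lemma dvdCount_periodic (hPQ : ∀ p ∈ P, p ∣ Q) : Periodic (dvdCount P) Q := fun n => by
  unfold dvdCount
  congr 1
  exact filter_congr fun p hp => (Nat.dvd_add_left (hPQ p hp)).trans Iff.rfl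

lemma dvdCount_mul (hP : ∀ p ∈ P, p.Prime) {a b : ℕ} (h : ∀ p ∈ P, ¬ p * p ∣ a * b) :
    dvdCount P (a * b) = dvdCount P a + dvdCount P b := by
  unfold dvdCount
  rw [← card_union_of_disjoint]
  · congr 1
    ext p
    simp only [mem_filter, mem_union]
    constructor
    · rintro ⟨hp, hab⟩
      exact ((hP p hp).dvd_mul.1 hab).imp (⟨hp, ·⟩) (⟨hp, ·⟩)
    · rintro (⟨hp, ha⟩ | ⟨hp, hb⟩)
      exacts [⟨hp, ha.mul_right b⟩, ⟨hp, hb.mul_left a⟩]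
  · exact disjoint_filter.2 fun p hp ha hb => h p hp (mul_dvd_mul ha hb)

lemma sum_range_ite_dvd {d : ℕ} (hd : d ∣ Q) :
    ∑ n ∈ range Q, (if d ∣ n then (1 : ℝ) else 0) = Q / d := by
  rw [sum_boole, ← Nat.count_eq_card_filter_range, Nat.count_dvd_of_dvd hd,
    Nat.cast_div_charZero hd]

lemma cast_dvdCount (P : Finset ℕ) (n : ℕ) :
    (dvdCount P n : ℝ) = ∑ p ∈ P, if p ∣ n then (1 : ℝ) else 0 :=
  natCast_card_filter _ _

lemma sum_range_dvdCount (hPQ : ∀ p ∈ P, p ∣ Q) :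
    ∑ n ∈ range Q, (dvdCount P n : ℝ) = Q * recipSum P := by
  simp only [cast_dvdCount, recipSum, mul_sum]
  rw [sum_comm]
  exact sum_congr rfl fun p hp => by rw [sum_range_ite_dvd (hPQ p hp), div_eq_mul_inv]

lemma sum_range_ite_dvd_mul_ite_dvd_le {p q : ℕ} (hp : p.Prime) (hq : q.Prime) (hpQ : p ∣ Q)
    (hqQ : q ∣ Q) :
    ∑ n ∈ range Q, (if p ∣ n then (1 : ℝ) else 0) * (if q ∣ n then 1 else 0)
      ≤ Q * ((p : ℝ)⁻¹ * (q : ℝ)⁻¹) + if p = q then Q * (p : ℝ)⁻¹ else 0 := by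
  simp only [ite_zero_mul_ite_zero, one_mul, ← Nat.lcm_dvd_iff]
  rw [sum_range_ite_dvd (Nat.lcm_dvd hpQ hqQ)]
  by_cases hpq : p = q
  · subst hpq
    rw [Nat.lcm_self, if_pos rfl, div_eq_mul_inv]
    have : (0 : ℝ) ≤ Q * ((p : ℝ)⁻¹ * (p : ℝ)⁻¹) := by positivity
    linarith
  · rw [if_neg hpq, add_zero, ((Nat.coprime_primes hp hq).2 hpq).lcm_eq_mul, Nat.cast_mul]
    exact le_of_eq (by ring)

lemma sum_range_dvdCount_sq_le (hP : ∀ p ∈ P, p.Prime) (hPQ : ∀ p ∈ P, p ∣ Q) :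
    ∑ n ∈ range Q, (dvdCount P n : ℝ) ^ 2 ≤ Q * (recipSum P ^ 2 + recipSum P) := by
  calc ∑ n ∈ range Q, (dvdCount P n : ℝ) ^ 2
      = ∑ p ∈ P, ∑ q ∈ P, ∑ n ∈ range Q,
          (if p ∣ n then (1 : ℝ) else 0) * (if q ∣ n then 1 else 0) := by
        simp only [cast_dvdCount, sq, sum_mul_sum]
        rw [sum_comm]
        exact sum_congr rfl fun p _ => sum_comm
    _ ≤ ∑ p ∈ P, ∑ q ∈ P, (Q * ((p : ℝ)⁻¹ * (q : ℝ)⁻¹) + if p = q then Q * (p : ℝ)⁻¹ else 0) :=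
        sum_le_sum fun p hp => sum_le_sum fun q hq =>
          sum_range_ite_dvd_mul_ite_dvd_le (hP p hp) (hP q hq) (hPQ p hp) (hPQ q hq)
    _ = Q * (recipSum P ^ 2 + recipSum P) := by
        rw [sum_congr rfl fun p hp => by rw [sum_add_distrib, sum_ite_eq, if_pos hp],
          sum_add_distrib, recipSum, sq, sum_mul_sum, mul_add, mul_sum, mul_sum]
        simp_rw [mul_sum]

theorem sum_range_sq_dvdCount_sub_le (hP : ∀ p ∈ P, p.Prime) (hPQ : ∀ p ∈ P, p ∣ Q) :
    ∑ n ∈ range Q, ((dvdCount P n : ℝ) - recipSum P) ^ 2 ≤ Q * recipSum P := by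
  have hexpand : ∑ n ∈ range Q, ((dvdCount P n : ℝ) - recipSum P) ^ 2
      = ∑ n ∈ range Q, (dvdCount P n : ℝ) ^ 2
        - 2 * recipSum P * ∑ n ∈ range Q, (dvdCount P n : ℝ) + Q * recipSum P ^ 2 := by
    simp only [sub_sq, sum_add_distrib, sum_sub_distrib, sum_const, card_range, nsmul_eq_mul,
      ← sum_mul, ← mul_sum]
    ring
  rw [hexpand, sum_range_dvdCount hPQ]
  linarith [sum_range_dvdCount_sq_le hP hPQ]

end DvdCount

lemma Nat.count_mul_sq_le_sum_sq {q : ℕ → Prop} [DecidablePred q] {f : ℕ → ℝ} {t : ℝ}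
    (ht : 0 ≤ t) (h : ∀ n, q n → t ≤ |f n|) (Q : ℕ) :
    Nat.count q Q * t ^ 2 ≤ ∑ n ∈ range Q, f n ^ 2 := by
  rw [Nat.count_eq_card_filter_range, ← nsmul_eq_mul, ← sum_const]
  calc ∑ _n ∈ range Q with q _n, t ^ 2 ≤ ∑ n ∈ range Q with q n, f n ^ 2 :=
        sum_le_sum fun n hn => by
          rw [← sq_abs (f n)]
          exact pow_le_pow_left₀ ht (h n (mem_filter.1 hn).2) 2
    _ ≤ ∑ n ∈ range Q, f n ^ 2 :=
        sum_le_sum_of_subset_of_nonneg (filter_subset _ _) fun n _ _ => sq_nonneg _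

lemma exists_sum_range_mem_Icc {f : ℕ → ℝ} (hf0 : ∀ n, 0 ≤ f n) (hf1 : ∀ n, f n ≤ 1)
    (hf : ¬ Summable f) {K : ℝ} (hK : 0 ≤ K) :
    ∃ M, K ≤ ∑ n ∈ range M, f n ∧ ∑ n ∈ range M, f n ≤ K + 1 := by
  classical
  have hex : ∃ M, K ≤ ∑ n ∈ range M, f n :=
    ((not_summable_iff_tendsto_nat_atTop_of_nonneg hf0).1 hf |>.eventually_ge_atTop K).exists
  refine ⟨Nat.find hex, Nat.find_spec hex, ?_⟩
  rcases h : Nat.find hex with _ | M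
  · simp only [range_zero, sum_empty]
    linarith
  · have hM : ∑ n ∈ range M, f n < K := not_le.1 (Nat.find_min hex (by omega))
    rw [sum_range_succ]
    linarith [hf1 M]

lemma exists_primes_gt_recipSum_mem_Icc (y : ℕ) {K : ℝ} (hK : 0 ≤ K) :
    ∃ P : Finset ℕ, (∀ p ∈ P, p.Prime ∧ y < p) ∧ K ≤ recipSum P ∧ recipSum P ≤ K + 1 := by
  classical
  set f : ℕ → ℝ := {p | p.Prime ∧ y < p}.indicator fun n => (n : ℝ)⁻¹
  have hf : ¬ Summable f := by
    rw [← summable_nat_add_iff (y + 1)]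
    intro hs
    apply not_summable_one_div_on_primes
    rw [← summable_nat_add_iff (y + 1)]
    convert hs using 2 with n
    simp [f, Set.indicator_apply, show y < n + (y + 1) by omega]
  have hf0 : ∀ n, 0 ≤ f n := fun n => Set.indicator_nonneg (fun n _ => by positivity) n
  have hf1 : ∀ n, f n ≤ 1 := fun n => by
    simp only [f, Set.indicator_apply]
    split_ifs
    exacts [Nat.cast_inv_le_one n, zero_le_one]
  obtain ⟨M, hM⟩ := exists_sum_range_mem_Icc hf0 hf1 hf hK
  refine ⟨{p ∈ range M | p.Prime ∧ y < p}, fun p hp => (mem_filter.1 hp).2, ?_⟩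
  simpa only [recipSum, sum_filter, f, Set.indicator_apply, Set.mem_ofPred_eq] using hM

section Construction

variable {P : Finset ℕ} {Q : ℕ}

lemma count_mul_sq_le_of_le_abs_dvdCount_sub (hP : ∀ p ∈ P, p.Prime) (hPQ : ∀ p ∈ P, p ∣ Q)
    {q : ℕ → Prop} [DecidablePred q] {t : ℝ} (ht : 0 ≤ t)
    (h : ∀ n, q n → t ≤ |(dvdCount P n : ℝ) - recipSum P|) :
    Nat.count q Q * t ^ 2 ≤ Q * recipSum P :=
  (Nat.count_mul_sq_le_sum_sq ht h Q).trans (sum_range_sq_dvdCount_sub_le hP hPQ)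

def richSet (P : Finset ℕ) : Set ℕ := {n | 0 < n ∧ 3 / 4 * recipSum P ≤ dvdCount P n}

lemma one_sub_le_lowerDensity_richSet (hP : ∀ p ∈ P, p.Prime) (hQ : 0 < Q)
    (hPQ : ∀ p ∈ P, p ∣ Q) (hμ : 0 < recipSum P) :
    1 - 16 / recipSum P ≤ lowerDensity (richSet P) := by
  classical
  set μ := recipSum P
  set rich : ℕ → Prop := fun n => 3 / 4 * μ ≤ dvdCount P n
  have hQ' : (0 : ℝ) < Q := by exact_mod_cast hQ
  have hpoor : (Nat.count (¬ rich ·) Q : ℝ) * (μ / 4) ^ 2 ≤ Q * μ :=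
    count_mul_sq_le_of_le_abs_dvdCount_sub hP hPQ (by positivity) fun n hn => by
      rw [abs_sub_comm]
      exact le_abs.2 (Or.inl (by simp only [rich, not_le] at hn; linarith))
  have hcount : (Nat.count rich Q : ℝ) + Nat.count (¬ rich ·) Q = Q := by
    exact_mod_cast Nat.count_add_count_not rich Q
  calc 1 - 16 / μ ≤ Nat.count rich Q / Q := by
        rw [le_div_iff₀ hQ', sub_mul, div_mul_eq_mul_div, one_mul]
        have : (Nat.count (¬ rich ·) Q : ℝ) ≤ 16 * Q / μ := by
          rw [le_div_iff₀ hμ]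
          nlinarith
        linarith
    _ ≤ lowerDensity {n | rich n} :=
        le_lowerDensity_of_periodic hQ fun n => by simp only [rich, dvdCount_periodic hPQ n]
    _ ≤ lowerDensity (richSet P) := lowerDensity_mono fun n hn h => ⟨hn, h⟩

lemma upperDensity_mul_richSet_le {y : ℕ} (hP : ∀ p ∈ P, p.Prime ∧ y < p) (hQ : 0 < Q)
    (hPQ : ∀ p ∈ P, p ∣ Q) (hμ : 0 < recipSum P) :
    upperDensity {m | ∃ a ∈ richSet P, ∃ a' ∈ richSet P, m = a * a'}
      ≤ 4 / recipSum P + recipSum P / (y + 1) := by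
  classical
  set μ := recipSum P
  set veryRich : ℕ → Prop := fun n => 3 / 2 * μ ≤ dvdCount P n
  have hQ' : (0 : ℝ) < Q := by exact_mod_cast hQ
  have hcover : {m | ∃ a ∈ richSet P, ∃ a' ∈ richSet P, m = a * a'}
      ⊆ {m | veryRich m} ∪ ⋃ p ∈ P, {m | p * p ∣ m} := by
    rintro _ ⟨a, ⟨-, ha⟩, a', ⟨-, ha'⟩, rfl⟩
    by_cases hsq : ∃ p ∈ P, p * p ∣ a * a'
    · obtain ⟨p, hp, hpp⟩ := hsq
      exact Or.inr (Set.mem_biUnion hp hpp)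
    · push Not at hsq
      refine Or.inl ?_
      simp only [Set.mem_ofPred_eq, veryRich, dvdCount_mul (fun p hp => (hP p hp).1) hsq]
      push_cast
      linarith
  have hveryRich : upperDensity {m | veryRich m} ≤ 4 / μ := by
    have hcount : (Nat.count veryRich Q : ℝ) * (μ / 2) ^ 2 ≤ Q * μ :=
      count_mul_sq_le_of_le_abs_dvdCount_sub (fun p hp => (hP p hp).1) hPQ (by positivity)
        fun n hn => le_abs.2 (Or.inl (by simp only [veryRich] at hn; linarith))
    refine (upperDensity_le_of_periodic hQ fun n => by
      simp only [veryRich, dvdCount_periodic hPQ n]).trans ?_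
    rw [div_le_div_iff₀ hQ' hμ]
    nlinarith
  have hsquares : ∑ p ∈ P, 1 / ((p * p : ℕ) : ℝ) ≤ μ / (y + 1) := by
    rw [show μ = ∑ p ∈ P, (p : ℝ)⁻¹ from rfl, sum_div]
    refine sum_le_sum fun p hp => ?_
    have hyp : (y : ℝ) + 1 ≤ p := by exact_mod_cast (hP p hp).2
    rw [Nat.cast_mul, one_div, mul_inv, div_eq_mul_inv]
    gcongr
  calc upperDensity {m | ∃ a ∈ richSet P, ∃ a' ∈ richSet P, m = a * a'}
      ≤ upperDensity {m | veryRich m} + ∑ p ∈ P, upperDensity {m | p * p ∣ m} :=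
        (upperDensity_mono hcover).trans
          ((upperDensity_union_le _ _).trans (by gcongr; exact upperDensity_biUnion_le _ _))
    _ ≤ 4 / μ + ∑ p ∈ P, 1 / ((p * p : ℕ) : ℝ) := by
        gcongr with p hp
        exact upperDensity_setOf_dvd_le (Nat.mul_pos (hP p hp).1.pos (hP p hp).1.pos)
    _ ≤ 4 / μ + μ / (y + 1) := by gcongr

end Construction

theorem stmt19_general (α : ℝ) (hα1 : α < 1) (ε : ℝ) (hε : 0 < ε) :
    ∃ A : Set ℕ, 0 ∉ A ∧ α < lowerDensity A ∧
      upperDensity {m : ℕ | ∃ a ∈ A, ∃ a' ∈ A, m = a * a'} < ε := by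
  have h1α : 0 < 1 - α := sub_pos.2 hα1
  set K := 16 / (1 - α) + 8 / ε
  obtain ⟨y, hy⟩ := exists_nat_gt (2 * (K + 1) / ε)
  obtain ⟨P, hP, hKμ, hμK⟩ := exists_primes_gt_recipSum_mem_Icc y (K := K) (by positivity)
  have hμ : 0 < recipSum P := lt_of_lt_of_le (by positivity) hKμ
  have hQ : 0 < ∏ p ∈ P, p := prod_pos fun p hp => (hP p hp).1.pos
  have hPQ : ∀ p ∈ P, p ∣ ∏ p ∈ P, p := fun p hp => dvd_prod_of_mem _ hp
  refine ⟨richSet P, fun h => h.1.false, ?_, ?_⟩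
  · refine lt_of_lt_of_le ?_ (one_sub_le_lowerDensity_richSet (fun p hp => (hP p hp).1) hQ hPQ hμ)
    have h16 : 16 < recipSum P * (1 - α) :=
      (div_lt_iff₀ h1α).1 ((lt_add_of_pos_right _ (by positivity)).trans_le hKμ)
    rw [lt_sub_comm, div_lt_iff₀ hμ]
    linarith
  · refine lt_of_le_of_lt (upperDensity_mul_richSet_le hP hQ hPQ hμ) ?_
    have h4 : 4 / recipSum P ≤ ε / 2 := by
      rw [div_le_iff₀ hμ]
      nlinarith [(div_le_iff₀ hε).1 ((le_add_of_nonneg_left (by positivity)).trans hKμ)]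
    have hy' : recipSum P / (y + 1) < ε / 2 := by
      rw [div_lt_iff₀ (by positivity)]
      nlinarith [(div_lt_iff₀ hε).1 hy]
    linarith

/-- For every `0 < α < 1` and `ε > 0` there is a set `A` of positive integers with
lower density greater than `α` whose product set `A·A` has upper density less than `ε`. -/
theorem stmt19 (α : ℝ) (hα0 : 0 < α) (hα1 : α < 1) (ε : ℝ) (hε : 0 < ε) :
    ∃ A : Set ℕ, 0 ∉ A ∧ α < lowerDensity A ∧
      upperDensity {m : ℕ | ∃ a ∈ A, ∃ a' ∈ A, m = a * a'} < ε :=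
  stmt19_general α hα1 ε hε
end
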